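/- arXiv:1812.09667 — 6 statements merged into one kernel-verified Lean document; each statement's English description precedes it below -/
import Mathlib

section
/- Let G be a locally finite weighted graph with vertex weights ν and edge weights μ, and let Ω be a finite connected subset of vertices. If u is an eigenfunction of the Dirichlet p-Laplacian on Ω (p > 1) with u ≥ 0 on Ω, then u > 0 on Ω. -/
open scoped BigOperators

namespace PGraph

variable {V : Type*}

/-- The `p`-Dirichlet energy `E_p(u) = (1/2) ∑_{x,y} μ_{xy} |u(y)-u(x)|^p`. -/
noncomputable def energy (μ : V → V → ℝ) (p : ℝ) (u : V → ℝ) : ℝ :=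
  (1 / 2) * ∑ᶠ x : V, ∑ᶠ y : V, μ x y * |u y - u x| ^ p

/-- `‖u‖_{p,Ω}^p = ∑_{x∈Ω} |u(x)|^p ν_x`. -/
noncomputable def pnormP (ν : V → ℝ) (Ω : Finset V) (p : ℝ) (u : V → ℝ) : ℝ :=
  ∑ x ∈ Ω, |u x| ^ p * ν x

/-- The `p`-Laplacian `Δ_p u(x) = (1/ν_x) ∑_y μ_{xy} |u(y)-u(x)|^{p-2}(u(y)-u(x))`. -/
noncomputable def plap (μ : V → V → ℝ) (ν : V → ℝ) (p : ℝ) (u : V → ℝ) (x : V) : ℝ :=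
  (1 / ν x) * ∑ᶠ y : V, μ x y * (|u y - u x| ^ (p - 2) * (u y - u x))

/-- `u` is an eigenfunction of the Dirichlet `p`-Laplacian on `Ω` with eigenvalue `lam`:
`u` vanishes outside `Ω` (zero extension), `u ≢ 0` on `Ω`, and
`Δ_p u = -lam |u|^{p-2} u` on `Ω`. -/
def IsDirEigenfun (μ : V → V → ℝ) (ν : V → ℝ) (Ω : Finset V) (p : ℝ)
    (u : V → ℝ) (lam : ℝ) : Prop :=
  (∀ x, x ∉ Ω → u x = 0) ∧ (∃ x ∈ Ω, u x ≠ 0) ∧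
    ∀ x ∈ Ω, plap μ ν p u x = -lam * (|u x| ^ (p - 2) * u x)

/-- The first Dirichlet eigenvalue, via the Rayleigh quotient characterization. -/
noncomputable def lam1 (μ : V → V → ℝ) (ν : V → ℝ) (Ω : Finset V) (p : ℝ) : ℝ :=
  sInf {t : ℝ | ∃ u : V → ℝ, (∀ x, x ∉ Ω → u x = 0) ∧ (∃ x ∈ Ω, u x ≠ 0) ∧
    t = energy μ p u / pnormP ν Ω p u}

/-- The maximum Dirichlet eigenvalue, via the Rayleigh quotient characterization. -/
noncomputable def lamMax (μ : V → V → ℝ) (ν : V → ℝ) (Ω : Finset V) (p : ℝ) : ℝ :=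
  sSup {t : ℝ | ∃ u : V → ℝ, (∀ x, x ∉ Ω → u x = 0) ∧ (∃ x ∈ Ω, u x ≠ 0) ∧
    t = energy μ p u / pnormP ν Ω p u}

/-- The induced subgraph on `Ω` is connected. -/
def ConnOn (μ : V → V → ℝ) (Ω : Finset V) : Prop :=
  ∀ x ∈ Ω, ∀ y ∈ Ω,
    Relation.ReflTransGen (fun a b => a ∈ Ω ∧ b ∈ Ω ∧ 0 < μ a b) x y

/-- The induced subgraph on `Ω` is bipartite with parts `V₁, V₂`. -/
def BipartiteOn (μ : V → V → ℝ) (Ω : Finset V) : Prop :=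
  ∃ V₁ V₂ : Set V, (Ω : Set V) = V₁ ∪ V₂ ∧ Disjoint V₁ V₂ ∧
    ∀ x ∈ Ω, ∀ y ∈ Ω, 0 < μ x y → ((x ∈ V₁ ∧ y ∈ V₂) ∨ (x ∈ V₂ ∧ y ∈ V₁))

/-- A locally finite weighted graph: symmetric nonnegative edge weights without
self-loops, finitely many neighbours at each vertex, positive vertex weights. -/
structure IsWeightedGraph (μ : V → V → ℝ) (ν : V → ℝ) : Prop where
  symm : ∀ x y, μ x y = μ y x
  nonneg : ∀ x y, 0 ≤ μ x y
  loopless : ∀ x, μ x x = 0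
  locFin : ∀ x, (Function.support (μ x)).Finite
  nuPos : ∀ x, 0 < ν x

/-- The edge boundary measure `|∂U|_μ` of a finite vertex set `U`. -/
noncomputable def bdryWt (μ : V → V → ℝ) (U : Finset V) : ℝ :=
  ∑ x ∈ U, ∑ᶠ y ∈ {z : V | z ∉ U}, μ x y

/-- The Dirichlet Cheeger constant `h_{μ,ν}(Ω) = min_{∅ ≠ U ⊆ Ω} |∂U|_μ / |U|_ν`. -/
noncomputable def cheeger (μ : V → V → ℝ) (ν : V → ℝ) (Ω : Finset V) : ℝ :=
  sInf {t : ℝ | ∃ U : Finset V, U ⊆ Ω ∧ U.Nonempty ∧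
    t = bdryWt μ U / ∑ x ∈ U, ν x}

end PGraph

namespace PGraph

/-- If `u` is an eigenfunction of the Dirichlet `p`-Laplacian (`p > 1`) on a
finite connected subset `Ω` with `u ≥ 0` on `Ω`, then `u > 0` on `Ω`. -/
theorem eigenfun_nonneg_pos {V : Type*} {μ : V → V → ℝ} {ν : V → ℝ}
    (hG : IsWeightedGraph μ ν) {Ω : Finset V} (hconn : ConnOn μ Ω)
    {p : ℝ} (hp : 1 < p) {u : V → ℝ} {lam : ℝ}
    (hu : IsDirEigenfun μ ν Ω p u lam) (hnonneg : ∀ x ∈ Ω, 0 ≤ u x) :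
    ∀ x ∈ Ω, 0 < u x := by
  obtain ⟨hzero, ⟨x₁, hx₁Ω, hx₁⟩, heig⟩ := hu
  -- u is nonneg everywhere
  have hnn : ∀ y, 0 ≤ u y := by
    intro y
    by_cases hy : y ∈ Ω
    · exact hnonneg y hy
    · rw [hzero y hy]
  -- key step: zeros propagate along edges
  have key : ∀ x ∈ Ω, u x = 0 → ∀ y, 0 < μ x y → u y = 0 := by
    intro x hxΩ hux y hμ
    have hplap : plap μ ν p u x = 0 := by
      rw [heig x hxΩ, hux]
      simp
    have hν := hG.nuPos x
    set f : V → ℝ := fun y => μ x y * (|u y - u x| ^ (p - 2) * (u y - u x)) with hf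
    have hsupp : Function.support f ⊆ (hG.locFin x).toFinset := by
      intro z hz
      simp only [Finset.mem_coe, Set.Finite.mem_toFinset, Function.mem_support]
      intro h0
      apply hz
      simp [hf, h0]
    have hsum : ∑ᶠ z, f z = ∑ z ∈ (hG.locFin x).toFinset, f z :=
      finsum_eq_sum_of_support_subset f (by exact_mod_cast hsupp)
    have hS : ∑ z ∈ (hG.locFin x).toFinset, f z = 0 := by
      have : (1 / ν x) * ∑ᶠ z, f z = 0 := hplap
      rw [hsum] at this
      rcases mul_eq_zero.mp this with h | h
      · exact absurd h (by positivity)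
      · exact h
    have hfnn : ∀ z ∈ (hG.locFin x).toFinset, 0 ≤ f z := by
      intro z _
      have h1 : 0 ≤ μ x z := hG.nonneg x z
      have h2 : 0 ≤ u z - u x := by rw [hux]; simpa using hnn z
      positivity
    have hfz : f y = 0 := by
      by_cases hy : y ∈ (hG.locFin x).toFinset
      · exact (Finset.sum_eq_zero_iff_of_nonneg hfnn).mp hS y hy
      · simp only [Set.Finite.mem_toFinset, Function.mem_support, not_not] at hy
        simp [hf, hy]
    -- from f y = 0 and μ x y > 0 deduce u y = 0
    by_contra huy
    have hpos : 0 < u y := lt_of_le_of_ne (hnn y) (Ne.symm huy)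
    have : 0 < f y := by
      have habs : 0 < |u y - u x| := by rw [hux]; simpa [abs_of_pos hpos]
      have hr : 0 < |u y - u x| ^ (p - 2) := Real.rpow_pos_of_pos habs _
      have : 0 < u y - u x := by rw [hux]; simpa
      exact mul_pos hμ (mul_pos hr this)
    exact this.ne' hfz
  -- now by contradiction & connectedness
  intro x hxΩ
  rcases lt_or_eq_of_le (hnonneg x hxΩ) with h | h
  · exact h
  exfalso
  have prop : ∀ y, Relation.ReflTransGen
      (fun a b => a ∈ Ω ∧ b ∈ Ω ∧ 0 < μ a b) x y → u y = 0 := by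
    intro y hp
    induction hp with
    | refl => exact h.symm
    | tail _ step ih =>
      obtain ⟨ha, hb, hμab⟩ := step
      exact key _ ha ih _ hμab
  exact hx₁ (prop x₁ (hconn x hxΩ x₁ hx₁Ω))

end PGraph
end

section
/- Let Ω be a finite connected subset of a weighted graph and p > 1. If u is a first eigenfunction (i.e., an eigenfunction pertaining to the smallest eigenvalue λ_{1,p}(Ω)) of the Dirichlet p-Laplacian on Ω, then either u > 0 on all of Ω or u < 0 on all of Ω. -/
open scoped BigOperators

namespace PGraph

set_option maxHeartbeats 2000000 in
/-- A first eigenfunction of the Dirichlet `p`-Laplacian (`p > 1`) on a finite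
connected subset `Ω` is either everywhere positive or everywhere negative on `Ω`. -/
theorem first_eigenfun_sign {V : Type*} {μ : V → V → ℝ} {ν : V → ℝ}
    (hG : IsWeightedGraph μ ν) {Ω : Finset V} (hconn : ConnOn μ Ω)
    {p : ℝ} (hp : 1 < p) {u : V → ℝ}
    (hu : IsDirEigenfun μ ν Ω p u (lam1 μ ν Ω p)) :
    (∀ x ∈ Ω, 0 < u x) ∨ (∀ x ∈ Ω, u x < 0) := by
  classical
  obtain ⟨hu0, ⟨b, hbΩ, hb0⟩, heig⟩ := hu
  have hsym := hG.symm
  have hμ0 := hG.nonneg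
  have hp0 : (0:ℝ) < p := lt_trans one_pos hp
  have hpne : p ≠ 0 := ne_of_gt hp0
  have hp1 : (0:ℝ) < p - 1 := by linarith
  -- a finite set containing Ω and all its neighbours
  set T : Finset V := Ω ∪ Ω.biUnion (fun x => (hG.locFin x).toFinset) with hTdef
  have hΩT : Ω ⊆ T := Finset.subset_union_left
  have hTmem : ∀ x ∈ Ω, ∀ y, μ x y ≠ 0 → y ∈ T := by
    intro x hx y hy
    exact Finset.mem_union_right _
      (Finset.mem_biUnion.2 ⟨x, hx, (hG.locFin x).mem_toFinset.2 hy⟩)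
  -- energy as a finite double sum
  have hEsum : ∀ w : V → ℝ, (∀ x, x ∉ Ω → w x = 0) →
      energy μ p w = (1/2) * ∑ x ∈ T, ∑ y ∈ T, μ x y * |w y - w x| ^ p := by
    intro w hw
    have hkey : ∀ x y : V, μ x y * |w y - w x| ^ p ≠ 0 → μ x y ≠ 0 ∧ w y ≠ w x := by
      intro x y h
      rcases mul_ne_zero_iff.1 h with ⟨h1, h2⟩
      refine ⟨h1, fun he => h2 ?_⟩
      rw [he, sub_self, abs_zero, Real.zero_rpow hpne]
    unfold energy
    congr 1
    have houter : (Function.support fun x => ∑ᶠ y, μ x y * |w y - w x| ^ p) ⊆ (T : Set V) := by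
      intro x hx
      simp only [Function.mem_support] at hx
      by_contra hxT
      apply hx
      have hz : ∀ y, μ x y * |w y - w x| ^ p = 0 := by
        intro y
        by_contra h
        obtain ⟨h1, h2⟩ := hkey x y h
        have hwx : w x = 0 := hw x (fun hh => hxT (Finset.mem_coe.2 (hΩT hh)))
        have hwy : w y ≠ 0 := by rw [hwx] at h2; exact h2
        have hyΩ : y ∈ Ω := by by_contra hyn; exact hwy (hw y hyn)
        have h1' : μ y x ≠ 0 := by rw [← hsym x y]; exact h1
        exact hxT (Finset.mem_coe.2 (hTmem y hyΩ x h1'))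
      calc (∑ᶠ y, μ x y * |w y - w x| ^ p) = ∑ᶠ y : V, (0:ℝ) := by
            exact finsum_congr hz
        _ = 0 := finsum_zero
    rw [finsum_eq_finset_sum_of_support_subset _ houter]
    refine Finset.sum_congr rfl (fun x hx => ?_)
    apply finsum_eq_finset_sum_of_support_subset
    intro y hy
    simp only [Function.mem_support] at hy
    obtain ⟨h1, h2⟩ := hkey x y hy
    by_cases hwy : w y = 0
    · have hwx : w x ≠ 0 := by rw [hwy] at h2; exact fun hh => h2 hh.symm
      have hxΩ : x ∈ Ω := by by_contra hxn; exact hwx (hw x hxn)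
      exact Finset.mem_coe.2 (hTmem x hxΩ y h1)
    · have hyΩ : y ∈ Ω := by by_contra hyn; exact hwy (hw y hyn)
      exact Finset.mem_coe.2 (hΩT hyΩ)
  -- plap inner sums as finite sums
  have hplapT : ∀ (h : V → ℝ) (x : V), x ∈ Ω →
      (∑ᶠ y, μ x y * h y) = ∑ y ∈ T, μ x y * h y := by
    intro h x hx
    apply finsum_eq_finset_sum_of_support_subset
    intro y hy
    simp only [Function.mem_support] at hy
    have hμ : μ x y ≠ 0 := fun h0 => hy (by rw [h0, zero_mul])
    exact Finset.mem_coe.2 (hTmem x hx y hμ)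
  -- |a|^(p-2) * a * a = |a|^p
  have habs : ∀ a : ℝ, |a| ^ (p - 2) * a * a = |a| ^ p := by
    intro a
    rcases eq_or_ne a 0 with rfl | ha
    · simp [Real.zero_rpow hpne]
    · have h1 : |a| ≠ 0 := abs_ne_zero.2 ha
      have h2 := Real.rpow_add_one h1 (p - 2)
      have h3 := Real.rpow_add_one h1 (p - 2 + 1)
      have e1 : |a| ^ p = |a| ^ (p - 2) * |a| * |a| := by
        conv_lhs => rw [show p = p - 2 + 1 + 1 by ring]
        rw [h3, h2]
      rw [e1, mul_assoc, mul_assoc, abs_mul_abs_self]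
  -- sign lemma
  have hrpow_inj : ∀ x y : ℝ, 0 ≤ x → 0 ≤ y → x ^ p = y ^ p → x = y := by
    intro x y hx hy h
    exact (Real.rpow_left_inj hx hy hpne).1 h
  have hsign : ∀ a c : ℝ, |(|c| - |a|)| ^ p = |c - a| ^ p → 0 ≤ a * c := by
    intro a c h
    have e : |(|c| - |a|)| = |c - a| := hrpow_inj _ _ (abs_nonneg _) (abs_nonneg _) h
    have e2 : (|c| - |a|) ^ 2 = (c - a) ^ 2 := by
      rw [← sq_abs (|c| - |a|), ← sq_abs (c - a), e]
    have hab : a * c = |a| * |c| := by nlinarith [sq_abs a, sq_abs c]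
    rw [hab]; positivity
  -- nonnegativity of energy, positivity of norm
  have hEnn : ∀ w : V → ℝ, 0 ≤ energy μ p w := by
    intro w
    unfold energy
    have h0 : 0 ≤ ∑ᶠ x, ∑ᶠ y, μ x y * |w y - w x| ^ p :=
      finsum_nonneg fun x => finsum_nonneg fun y =>
        mul_nonneg (hμ0 x y) (Real.rpow_nonneg (abs_nonneg _) p)
    linarith
  have hNpos : ∀ w : V → ℝ, (∃ x ∈ Ω, w x ≠ 0) → 0 < pnormP ν Ω p w := by
    rintro w ⟨x, hx, hwx⟩
    unfold pnormP
    refine Finset.sum_pos' (fun y _ => mul_nonneg (Real.rpow_nonneg (abs_nonneg _) p)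
      (hG.nuPos y).le) ⟨x, hx, ?_⟩
    exact mul_pos (Real.rpow_pos_of_pos (abs_pos.2 hwx) p) (hG.nuPos x)
  set lam := lam1 μ ν Ω p with hlamdef
  -- Rayleigh-quotient lower bound
  have hlam_le : ∀ w : V → ℝ, (∀ x, x ∉ Ω → w x = 0) → (∃ x ∈ Ω, w x ≠ 0) →
      lam * pnormP ν Ω p w ≤ energy μ p w := by
    intro w hw0 hwne
    have hNw := hNpos w hwne
    have hbdd : BddBelow {t : ℝ | ∃ g : V → ℝ, (∀ x, x ∉ Ω → g x = 0) ∧ (∃ x ∈ Ω, g x ≠ 0) ∧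
        t = energy μ p g / pnormP ν Ω p g} := by
      refine ⟨0, ?_⟩
      rintro t ⟨g, hg0, hgne, rfl⟩
      exact div_nonneg (hEnn g) (hNpos g hgne).le
    have hmem : energy μ p w / pnormP ν Ω p w ∈ {t : ℝ | ∃ g : V → ℝ,
        (∀ x, x ∉ Ω → g x = 0) ∧ (∃ x ∈ Ω, g x ≠ 0) ∧
        t = energy μ p g / pnormP ν Ω p g} := ⟨w, hw0, hwne, rfl⟩
    have h : lam ≤ energy μ p w / pnormP ν Ω p w := by
      rw [hlamdef]
      unfold lam1
      exact csInf_le hbdd hmem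
    calc lam * pnormP ν Ω p w ≤ (energy μ p w / pnormP ν Ω p w) * pnormP ν Ω p w :=
          mul_le_mul_of_nonneg_right h hNw.le
      _ = energy μ p w := div_mul_cancel₀ _ hNw.ne'
  -- Green's identity : energy u = lam * norm
  have hGreen : energy μ p u = lam * pnormP ν Ω p u := by
    have hA : ∀ x ∈ Ω, (∑ y ∈ T, μ x y * (|u y - u x| ^ (p - 2) * (u y - u x)))
        = ν x * plap μ ν p u x := by
      intro x hx
      have h := hplapT (fun y => |u y - u x| ^ (p - 2) * (u y - u x)) x hx
      have hν : ν x ≠ 0 := (hG.nuPos x).ne'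
      unfold plap
      rw [h]
      field_simp
    have hterm : ∀ x y : V, μ x y * |u y - u x| ^ p
        = (μ x y * (|u y - u x| ^ (p - 2) * (u y - u x))) * u y
          - (μ x y * (|u y - u x| ^ (p - 2) * (u y - u x))) * u x := by
      intro x y
      have h := habs (u y - u x)
      calc μ x y * |u y - u x| ^ p
          = μ x y * (|u y - u x| ^ (p - 2) * (u y - u x) * (u y - u x)) := by rw [← h]
        _ = _ := by ring
    have hswap : ∑ x ∈ T, ∑ y ∈ T, (μ x y * (|u y - u x| ^ (p - 2) * (u y - u x))) * u y
        = - ∑ x ∈ T, ∑ y ∈ T, (μ x y * (|u y - u x| ^ (p - 2) * (u y - u x))) * u x := by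
      rw [Finset.sum_comm]
      rw [← Finset.sum_neg_distrib]
      refine Finset.sum_congr rfl (fun a _ => ?_)
      rw [← Finset.sum_neg_distrib]
      refine Finset.sum_congr rfl (fun c _ => ?_)
      rw [hsym c a, abs_sub_comm (u a) (u c)]
      ring
    have hS2 : ∑ x ∈ T, ∑ y ∈ T, (μ x y * (|u y - u x| ^ (p - 2) * (u y - u x))) * u x
        = -(lam * pnormP ν Ω p u) := by
      rw [← Finset.sum_subset hΩT (fun x _ hxΩ => by
        simp [hu0 x hxΩ])]
      unfold pnormP
      rw [Finset.mul_sum, ← Finset.sum_neg_distrib]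
      refine Finset.sum_congr rfl (fun x hx => ?_)
      calc ∑ y ∈ T, (μ x y * (|u y - u x| ^ (p - 2) * (u y - u x))) * u x
          = (∑ y ∈ T, μ x y * (|u y - u x| ^ (p - 2) * (u y - u x))) * u x := by
            rw [Finset.sum_mul]
        _ = (ν x * plap μ ν p u x) * u x := by rw [hA x hx]
        _ = (ν x * (-lam * (|u x| ^ (p - 2) * u x))) * u x := by rw [heig x hx]
        _ = -(lam * ((|u x| ^ (p - 2) * u x * u x) * ν x)) := by ring
        _ = -(lam * (|u x| ^ p * ν x)) := by rw [habs (u x)]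
    have hsub : ∑ x ∈ T, ∑ y ∈ T, μ x y * |u y - u x| ^ p
        = (∑ x ∈ T, ∑ y ∈ T, (μ x y * (|u y - u x| ^ (p - 2) * (u y - u x))) * u y)
          - ∑ x ∈ T, ∑ y ∈ T, (μ x y * (|u y - u x| ^ (p - 2) * (u y - u x))) * u x := by
      rw [← Finset.sum_sub_distrib]
      refine Finset.sum_congr rfl (fun x _ => ?_)
      rw [← Finset.sum_sub_distrib]
      exact Finset.sum_congr rfl (fun y _ => hterm x y)
    rw [hEsum u hu0, hsub, hswap, hS2]
    ring
  -- |u|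
  set v : V → ℝ := fun x => |u x| with hv
  have hv0 : ∀ x, x ∉ Ω → v x = 0 := fun x hx => by
    simp only [hv]; rw [hu0 x hx, abs_zero]
  have hvb : v b ≠ 0 := by simp only [hv]; exact abs_ne_zero.2 hb0
  have hvne : ∃ x ∈ Ω, v x ≠ 0 := ⟨b, hbΩ, hvb⟩
  have hvnn : ∀ y, 0 ≤ v y := fun y => abs_nonneg _
  have hNv : pnormP ν Ω p v = pnormP ν Ω p u := by
    unfold pnormP
    exact Finset.sum_congr rfl (fun x _ => by simp only [hv, abs_abs])
  have hterm_le : ∀ x y, μ x y * |v y - v x| ^ p ≤ μ x y * |u y - u x| ^ p := by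
    intro x y
    refine mul_le_mul_of_nonneg_left ?_ (hμ0 x y)
    refine Real.rpow_le_rpow (abs_nonneg _) ?_ hp0.le
    simpa only [hv] using abs_abs_sub_abs_le_abs_sub (u y) (u x)
  have hEv_le : energy μ p v ≤ energy μ p u := by
    rw [hEsum v hv0, hEsum u hu0]
    refine mul_le_mul_of_nonneg_left ?_ (by norm_num)
    exact Finset.sum_le_sum fun x _ => Finset.sum_le_sum fun y _ => hterm_le x y
  have hEv : energy μ p v = lam * pnormP ν Ω p v := by
    refine le_antisymm ?_ (hlam_le v hv0 hvne)
    rw [hNv, ← hGreen]; exact hEv_le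
  -- edges join vertices with the same sign
  have hedge : ∀ x ∈ T, ∀ y ∈ T, μ x y ≠ 0 → 0 ≤ u x * u y := by
    have hEveq : energy μ p v = energy μ p u := by rw [hEv, hNv, hGreen]
    have hAeq : ∑ x ∈ T, ∑ y ∈ T, (μ x y * |u y - u x| ^ p - μ x y * |v y - v x| ^ p) = 0 := by
      have h1 : ∑ x ∈ T, ∑ y ∈ T, (μ x y * |u y - u x| ^ p - μ x y * |v y - v x| ^ p)
          = (∑ x ∈ T, ∑ y ∈ T, μ x y * |u y - u x| ^ p)
            - ∑ x ∈ T, ∑ y ∈ T, μ x y * |v y - v x| ^ p := by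
        rw [← Finset.sum_sub_distrib]
        refine Finset.sum_congr rfl (fun x _ => ?_)
        rw [← Finset.sum_sub_distrib]
      have h2 := hEsum u hu0
      have h3 := hEsum v hv0
      rw [hEveq] at h3
      rw [h1]
      rw [h2] at h3
      linarith
    have hzero : ∀ x ∈ T, ∀ y ∈ T,
        μ x y * |u y - u x| ^ p - μ x y * |v y - v x| ^ p = 0 := by
      have hnn : ∀ x ∈ T, 0 ≤ ∑ y ∈ T, (μ x y * |u y - u x| ^ p - μ x y * |v y - v x| ^ p) :=
        fun x _ => Finset.sum_nonneg fun y _ => sub_nonneg.2 (hterm_le x y)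
      have houter := (Finset.sum_eq_zero_iff_of_nonneg hnn).1 hAeq
      intro x hx y hy
      have hinner := (Finset.sum_eq_zero_iff_of_nonneg
        (fun y _ => sub_nonneg.2 (hterm_le x y))).1 (houter x hx)
      exact hinner y hy
    intro x hx y hy hμ
    have h := hzero x hx y hy
    have h2 : |u y - u x| ^ p = |v y - v x| ^ p := by
      have := sub_eq_zero.1 h
      exact mul_left_cancel₀ hμ this
    refine hsign (u x) (u y) ?_
    simp only [hv] at h2
    exact h2.symm
  -- strong minimum principle for v
  have hmin : ∀ x₀ ∈ Ω, u x₀ = 0 → ∀ y, μ x₀ y ≠ 0 → u y = 0 := by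
    intro x₀ hx₀ hux₀ y₁ hμ₁
    by_contra huy₁
    have hx₀T : x₀ ∈ T := hΩT hx₀
    have hy₁T : y₁ ∈ T := hTmem x₀ hx₀ y₁ hμ₁
    have hμpos : 0 < μ x₀ y₁ := (hμ0 x₀ y₁).lt_of_ne (Ne.symm hμ₁)
    have hvx₀ : v x₀ = 0 := by simp only [hv]; rw [hux₀, abs_zero]
    set c := v y₁ with hc
    have hcpos : 0 < c := abs_pos.2 huy₁
    have hbx₀ : b ≠ x₀ := fun h => hb0 (h ▸ hux₀)
    -- perturbation inequality
    have hF : ∀ t : ℝ, 0 < t →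
        0 ≤ (∑ y ∈ T, μ x₀ y * (|v y - t| ^ p - |v y| ^ p)) - lam * (t ^ p * ν x₀) := by
      intro t ht
      set w : V → ℝ := fun x => if x = x₀ then t else v x with hwdef
      have hwx₀ : w x₀ = t := by simp [hwdef]
      have hwne : ∀ x, x ≠ x₀ → w x = v x := by intro x hx; simp [hwdef, hx]
      have hw0 : ∀ x, x ∉ Ω → w x = 0 := by
        intro x hx
        rw [hwne x (fun h => hx (h ▸ hx₀)), hv0 x hx]
      have hwb : ∃ x ∈ Ω, w x ≠ 0 := ⟨b, hbΩ, by rw [hwne b hbx₀]; exact hvb⟩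
      have hsplit : ∑ x ∈ T, ∑ y ∈ T, (μ x y * |w y - w x| ^ p - μ x y * |v y - v x| ^ p)
          = 2 * ∑ y ∈ T, μ x₀ y * (|v y - t| ^ p - |v y| ^ p) := by
        have hd0 : ∀ x y : V, x ≠ x₀ → y ≠ x₀ →
            μ x y * |w y - w x| ^ p - μ x y * |v y - v x| ^ p = 0 := by
          intro x y hx hy
          rw [hwne x hx, hwne y hy, sub_self]
        have hdx₀ : ∀ y ∈ T, μ x₀ y * |w y - w x₀| ^ p - μ x₀ y * |v y - v x₀| ^ p
            = μ x₀ y * (|v y - t| ^ p - |v y| ^ p) := by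
          intro y _
          by_cases hy : y = x₀
          · rw [hy, hG.loopless x₀]; ring
          · rw [hwne y hy, hwx₀, hvx₀, sub_zero]; ring
        have hdy₀ : ∀ x, x ≠ x₀ → μ x x₀ * |w x₀ - w x| ^ p - μ x x₀ * |v x₀ - v x| ^ p
            = μ x₀ x * (|v x - t| ^ p - |v x| ^ p) := by
          intro x hx
          rw [hwne x hx, hwx₀, hvx₀, hsym x x₀, abs_sub_comm t (v x), zero_sub, abs_neg]
          ring
        rw [← Finset.add_sum_erase T _ hx₀T]
        have h1 : ∑ y ∈ T, (μ x₀ y * |w y - w x₀| ^ p - μ x₀ y * |v y - v x₀| ^ p)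
            = ∑ y ∈ T, μ x₀ y * (|v y - t| ^ p - |v y| ^ p) :=
          Finset.sum_congr rfl hdx₀
        have h2 : ∀ x ∈ T.erase x₀,
            (∑ y ∈ T, (μ x y * |w y - w x| ^ p - μ x y * |v y - v x| ^ p))
            = μ x₀ x * (|v x - t| ^ p - |v x| ^ p) := by
          intro x hx
          obtain ⟨hxne, _⟩ := Finset.mem_erase.1 hx
          rw [Finset.sum_eq_single_of_mem x₀ hx₀T (fun y _ hy => hd0 x y hxne hy)]
          exact hdy₀ x hxne
        rw [h1, Finset.sum_congr rfl h2]
        have h3 : ∑ x ∈ T.erase x₀, μ x₀ x * (|v x - t| ^ p - |v x| ^ p)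
            = ∑ x ∈ T, μ x₀ x * (|v x - t| ^ p - |v x| ^ p) :=
          Finset.sum_erase T (by rw [hG.loopless x₀]; ring)
        rw [h3]
        ring
      have hEw : energy μ p w
          = energy μ p v + ∑ y ∈ T, μ x₀ y * (|v y - t| ^ p - |v y| ^ p) := by
        have hsub2 : ∑ x ∈ T, ∑ y ∈ T, (μ x y * |w y - w x| ^ p - μ x y * |v y - v x| ^ p)
            = (∑ x ∈ T, ∑ y ∈ T, μ x y * |w y - w x| ^ p)
              - ∑ x ∈ T, ∑ y ∈ T, μ x y * |v y - v x| ^ p := by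
          rw [← Finset.sum_sub_distrib]
          refine Finset.sum_congr rfl (fun x _ => ?_)
          rw [← Finset.sum_sub_distrib]
        rw [hEsum w hw0, hEsum v hv0]
        rw [hsub2] at hsplit
        linarith
      have hNw : pnormP ν Ω p w = pnormP ν Ω p v + t ^ p * ν x₀ := by
        unfold pnormP
        rw [← Finset.add_sum_erase Ω _ hx₀, ← Finset.add_sum_erase Ω
          (fun x => |v x| ^ p * ν x) hx₀]
        have h4 : ∑ x ∈ Ω.erase x₀, |w x| ^ p * ν x = ∑ x ∈ Ω.erase x₀, |v x| ^ p * ν x :=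
          Finset.sum_congr rfl (fun x hx => by
            rw [hwne x (Finset.mem_erase.1 hx).1])
        rw [h4, hwx₀, hvx₀, abs_zero, Real.zero_rpow hpne, abs_of_pos ht]
        ring
      have hle := hlam_le w hw0 hwb
      rw [hEw, hNw, hEv] at hle
      linarith [hle]
    -- quantitative bounds
    set C : ℝ := (∑ y ∈ T, μ x₀ y) + |lam| * ν x₀ with hC
    have hC0 : 0 ≤ C := add_nonneg (Finset.sum_nonneg fun y _ => hμ0 x₀ y)
      (mul_nonneg (abs_nonneg _) (hG.nuPos x₀).le)
    set Kc : ℝ := μ x₀ y₁ * (c/2) ^ (p-1) with hKc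
    have hK0 : 0 < Kc := mul_pos hμpos (Real.rpow_pos_of_pos (by linarith) _)
    have hbound : ∀ t : ℝ, 0 < t → t ≤ c/2 →
        (∑ y ∈ T, μ x₀ y * (|v y - t| ^ p - |v y| ^ p)) - lam * (t ^ p * ν x₀)
          ≤ C * t ^ p - Kc * t := by
      intro t ht htc
      have htp : 0 ≤ t ^ p := Real.rpow_nonneg ht.le p
      have hgen : ∀ y, μ x₀ y * (|v y - t| ^ p - |v y| ^ p) ≤ μ x₀ y * t ^ p := by
        intro y
        refine mul_le_mul_of_nonneg_left ?_ (hμ0 _ _)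
        have h0v : 0 ≤ |v y| ^ p := Real.rpow_nonneg (abs_nonneg _) p
        rcases le_total (v y) t with h | h
        · have h1 : |v y - t| ≤ t := by
            rw [abs_sub_comm, abs_of_nonneg (by linarith [hvnn y])]
            linarith [hvnn y]
          have h2 := Real.rpow_le_rpow (abs_nonneg _) h1 hp0.le
          linarith
        · have h1 : |v y - t| ≤ |v y| := by
            rw [abs_of_nonneg (by linarith), abs_of_nonneg (hvnn y)]
            linarith
          have h2 := Real.rpow_le_rpow (abs_nonneg _) h1 hp0.le
          linarith
      have hy₁bound : μ x₀ y₁ * (|v y₁ - t| ^ p - |v y₁| ^ p) ≤ -(Kc * t) := by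
        have hct : t < c := lt_of_le_of_lt htc (by linarith)
        have h1 : |v y₁ - t| = c - t := by
          rw [← hc, abs_of_nonneg (by linarith)]
        have h2 : |v y₁| = c := by rw [← hc, abs_of_nonneg (hvnn y₁)]
        have key : (c - t) ^ p + (c/2) ^ (p-1) * t ≤ c ^ p := by
          have hctpos : (0:ℝ) < c - t := by linarith
          have e1 : c ^ p = c ^ (p-1) * c := by
            rw [← Real.rpow_add_one (ne_of_gt hcpos) (p-1)]; ring_nf
          have e2 : (c - t) ^ p = (c - t) ^ (p-1) * (c - t) := by
            rw [← Real.rpow_add_one (ne_of_gt hctpos) (p-1)]; ring_nf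
          have h3 : (c - t) ^ (p-1) ≤ c ^ (p-1) :=
            Real.rpow_le_rpow (by linarith) (by linarith) (by linarith)
          have h4 : (c/2) ^ (p-1) ≤ (c - t) ^ (p-1) :=
            Real.rpow_le_rpow (by linarith) (by linarith) (by linarith)
          have h5 : 0 ≤ (c - t) ^ (p-1) := Real.rpow_nonneg hctpos.le _
          rw [e1, e2]
          nlinarith
        rw [h1, h2]
        calc μ x₀ y₁ * ((c - t) ^ p - c ^ p)
            ≤ μ x₀ y₁ * (-((c/2) ^ (p-1) * t)) :=
              mul_le_mul_of_nonneg_left (by linarith) (hμ0 _ _)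
          _ = -(Kc * t) := by rw [hKc]; ring
      have hsum : ∑ y ∈ T, μ x₀ y * (|v y - t| ^ p - |v y| ^ p)
          ≤ (∑ y ∈ T, μ x₀ y) * t ^ p - Kc * t := by
        rw [← Finset.add_sum_erase T _ hy₁T]
        have h5 : ∑ y ∈ T.erase y₁, μ x₀ y * (|v y - t| ^ p - |v y| ^ p)
            ≤ ∑ y ∈ T.erase y₁, μ x₀ y * t ^ p :=
          Finset.sum_le_sum fun y _ => hgen y
        have h6 : ∑ y ∈ T.erase y₁, μ x₀ y * t ^ p ≤ (∑ y ∈ T, μ x₀ y) * t ^ p := by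
          rw [← Finset.sum_mul]
          refine mul_le_mul_of_nonneg_right ?_ htp
          exact Finset.sum_le_sum_of_subset_of_nonneg (Finset.erase_subset _ _)
            (fun y _ _ => hμ0 x₀ y)
        linarith [hy₁bound]
      have hlamt : -(lam * (t ^ p * ν x₀)) ≤ |lam| * ν x₀ * t ^ p := by
        nlinarith [mul_nonneg htp (hG.nuPos x₀).le, neg_abs_le lam]
      rw [hC]
      linarith [hsum, hlamt]
    -- choose t₀ to get a contradiction
    set t₀ : ℝ := min (c/2) ((Kc/(C+1)) ^ (p-1)⁻¹) with ht₀def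
    have hKC : 0 < Kc/(C+1) := div_pos hK0 (by linarith)
    have ht₀pos : 0 < t₀ := lt_min (by linarith) (Real.rpow_pos_of_pos hKC _)
    have ht₀c : t₀ ≤ c/2 := min_le_left _ _
    have ht₀K : C * t₀ ^ (p-1) < Kc := by
      have h1 : t₀ ^ (p-1) ≤ Kc/(C+1) := by
        have h2 := Real.rpow_le_rpow ht₀pos.le (min_le_right (c/2) ((Kc/(C+1)) ^ (p-1)⁻¹))
          (le_of_lt hp1)
        rwa [Real.rpow_inv_rpow hKC.le (ne_of_gt hp1)] at h2
      have h3 : C * (Kc/(C+1)) < Kc := by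
        rw [mul_div_assoc']
        rw [div_lt_iff₀ (by linarith : (0:ℝ) < C + 1)]
        nlinarith
      calc C * t₀ ^ (p-1) ≤ C * (Kc/(C+1)) := mul_le_mul_of_nonneg_left h1 hC0
        _ < Kc := h3
    have e3 : t₀ ^ p = t₀ ^ (p-1) * t₀ := by
      rw [← Real.rpow_add_one (ne_of_gt ht₀pos) (p-1)]; ring_nf
    have hlt : C * t₀ ^ p - Kc * t₀ < 0 := by
      rw [e3]; nlinarith
    linarith [hF t₀ ht₀pos, hbound t₀ ht₀pos ht₀c]
  -- u never vanishes on Ω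
  have hnz : ∀ x ∈ Ω, u x ≠ 0 := by
    intro x₀ hx₀ hzero
    have hall : ∀ z, Relation.ReflTransGen (fun a c => a ∈ Ω ∧ c ∈ Ω ∧ 0 < μ a c) x₀ z →
        u z = 0 := by
      intro z hz
      induction hz with
      | refl => exact hzero
      | tail _ hbc ih => exact hmin _ hbc.1 ih _ hbc.2.2.ne'
    exact hb0 (hall b (hconn x₀ hx₀ b hbΩ))
  -- propagate sign
  rcases (hnz b hbΩ).lt_or_gt with hneg | hpos
  · right
    intro x hx
    have hall : ∀ z, Relation.ReflTransGen (fun a c => a ∈ Ω ∧ c ∈ Ω ∧ 0 < μ a c) b z →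
        u z < 0 := by
      intro z hz
      induction hz with
      | refl => exact hneg
      | tail _ hbc ih =>
        obtain ⟨h1, h2, h3⟩ := hbc
        have h4 := hedge _ (hΩT h1) _ (hΩT h2) h3.ne'
        rcases (hnz _ h2).lt_or_gt with h | h
        · exact h
        · nlinarith
    exact hall x (hconn b hbΩ x hx)
  · left
    intro x hx
    have hall : ∀ z, Relation.ReflTransGen (fun a c => a ∈ Ω ∧ c ∈ Ω ∧ 0 < μ a c) b z →
        0 < u z := by
      intro z hz
      induction hz with
      | refl => exact hpos
      | tail _ hbc ih =>
        obtain ⟨h1, h2, h3⟩ := hbc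
        have h4 := hedge _ (hΩT h1) _ (hΩT h2) h3.ne'
        rcases (hnz _ h2).lt_or_gt with h | h
        · nlinarith
        · exact h
    exact hall x (hconn b hbΩ x hx)

end PGraph
end

section
/- Let Ω be a finite connected subset of a weighted graph and p > 1. If u is an eigenfunction of the Dirichlet p-Laplacian on Ω with u > 0 on all of Ω, then u is a first eigenfunction, i.e., its eigenvalue equals λ_{1,p}(Ω). -/
open scoped BigOperators

/-!
Picone's inequality `|b - a|^{p-2} (b - a) (B^p / b^{p-1} - A^p / a^{p-1}) ≤ |B - A|^p` for
nonnegative `a, b, A, B` follows from the convexity of `t ↦ |t|^p`. Testing the eigen-equation of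
the positive eigenfunction `u` against `|v|^p / u^{p-1}` and summing by parts, it gives
`λ ‖v‖_p^p ≤ E_p(|v|) ≤ E_p(v)` for every `v` vanishing outside `Ω`. So `λ` bounds all Rayleigh
quotients from below, and it is the Rayleigh quotient of `u`.
-/

namespace PGraph

open Real

section Inequalities

variable {p : ℝ}

lemma rpow_add_mul_sub_le_abs_rpow (hp : 1 < p) {s : ℝ} (hs : 0 ≤ s) (x : ℝ) :
    s ^ p + p * (s ^ (p - 1) * (x - s)) ≤ |x| ^ p := by
  rcases hs.eq_or_lt with rfl | hs
  · simp [zero_rpow (by linarith : p ≠ 0), zero_rpow (by linarith : p - 1 ≠ 0)]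
    positivity
  have hsp : s ^ p = s ^ (p - 1) * s := by rw [← rpow_add_one hs.ne']; ring_nf
  rcases le_or_gt 0 x with hx | hx
  · have bernoulli := one_add_mul_self_le_rpow_one_add (s := x / s - 1)
      (by linarith [div_nonneg hx hs.le]) hp.le
    rw [add_sub_cancel, div_rpow hx hs.le, le_div_iff₀ (rpow_pos_of_pos hs p)] at bernoulli
    rw [abs_of_nonneg hx]
    calc s ^ p + p * (s ^ (p - 1) * (x - s)) = (1 + p * (x / s - 1)) * s ^ p := by
          rw [hsp]; field_simp
      _ ≤ x ^ p := bernoulli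
  · have hsx : p * (s ^ (p - 1) * x) ≤ 0 :=
      mul_nonpos_of_nonneg_of_nonpos (by linarith) (mul_nonpos_of_nonneg_of_nonpos
        (rpow_nonneg hs.le _) hx.le)
    have hss : 0 ≤ (p - 1) * s ^ p := mul_nonneg (by linarith) (rpow_nonneg hs.le _)
    calc s ^ p + p * (s ^ (p - 1) * (x - s)) = p * (s ^ (p - 1) * x) - (p - 1) * s ^ p := by
          rw [hsp]; ring
      _ ≤ |x| ^ p := by linarith [rpow_nonneg (abs_nonneg x) p]

lemma mul_rpow_div_rpow_sub_one (hp : p ≠ 0) {x y : ℝ} (hx : 0 ≤ x) (hy : 0 ≤ y) :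
    (x * y) ^ p / x ^ (p - 1) = x * y ^ p := by
  rcases hx.eq_or_lt with rfl | hx
  · simp [zero_rpow hp]
  rw [mul_rpow hx.le hy, rpow_sub_one hx.ne']
  field_simp

lemma picone_of_lt (hp : 1 < p) {a b A B : ℝ} (ha : 0 ≤ a) (hab : a < b) (hA : 0 ≤ A)
    (hB : 0 ≤ B) (haA : a = 0 → A = 0) :
    (b - a) ^ (p - 1) * (B ^ p / b ^ (p - 1) - A ^ p / a ^ (p - 1)) ≤ |B - A| ^ p := by
  obtain ⟨c, hc, rfl⟩ : ∃ c, 0 < c ∧ b = a + c := ⟨b - a, by linarith, by ring⟩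
  obtain ⟨β, hβ, rfl⟩ : ∃ β, 0 ≤ β ∧ B = (a + c) * β :=
    ⟨B / (a + c), by positivity, by field_simp⟩
  obtain ⟨α, hα, rfl⟩ : ∃ α, 0 ≤ α ∧ A = a * α := by
    rcases ha.eq_or_lt with rfl | ha
    · exact ⟨0, le_rfl, by simp [haA rfl]⟩
    · exact ⟨A / a, by positivity, by field_simp⟩
  have hp0 : p ≠ 0 := by linarith
  rw [mul_rpow_div_rpow_sub_one hp0 (by linarith) hβ, mul_rpow_div_rpow_sub_one hp0 ha hα,
    add_sub_cancel_left]
  -- convexity at `β` gives Young's inequality `p β^{p-1} α ≤ (p-1) β^p + α^p`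
  have young := rpow_add_mul_sub_le_abs_rpow hp hβ α
  rw [abs_of_nonneg hα] at young
  have tangent := rpow_add_mul_sub_le_abs_rpow hp (mul_nonneg hc.le hβ) ((a + c) * β - a * α)
  have hcp : c ^ p = c ^ (p - 1) * c := by rw [rpow_sub_one hc.ne']; field_simp
  rw [mul_rpow hc.le hβ, mul_rpow hc.le hβ, hcp] at tangent
  have hc1 : 0 ≤ c ^ (p - 1) * a := mul_nonneg (rpow_nonneg hc.le _) ha
  linear_combination tangent + mul_le_mul_of_nonneg_left young hc1

lemma picone (hp : 1 < p) {a b A B : ℝ} (ha : 0 ≤ a) (hb : 0 ≤ b) (hA : 0 ≤ A) (hB : 0 ≤ B)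
    (haA : a = 0 → A = 0) (hbB : b = 0 → B = 0) :
    |b - a| ^ (p - 2) * (b - a) * (B ^ p / b ^ (p - 1) - A ^ p / a ^ (p - 1)) ≤ |B - A| ^ p := by
  wlog hab : a ≤ b generalizing a b A B
  · rw [abs_sub_comm B A]
    convert this hb ha hB hA hbB haA (le_of_not_ge hab) using 1
    rw [abs_sub_comm]
    ring
  rcases hab.eq_or_lt with rfl | hab
  · simpa using rpow_nonneg (abs_nonneg _) p
  have hba : 0 < b - a := by linarith
  rw [abs_of_pos hba, ← rpow_add_one hba.ne', show p - 2 + 1 = p - 1 by ring]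
  exact picone_of_lt hp ha hab hA hB haA

lemma abs_rpow_sub_two_mul_self_mul_self (hp : p ≠ 0) (t : ℝ) :
    |t| ^ (p - 2) * t * t = |t| ^ p := by
  rcases eq_or_ne t 0 with rfl | ht
  · simp [zero_rpow hp]
  have ht : |t| ≠ 0 := abs_ne_zero.2 ht
  rw [mul_assoc, ← abs_mul_abs_self, ← mul_assoc, ← rpow_add_one ht, ← rpow_add_one ht]
  ring_nf

end Inequalities

section Graph

variable {V : Type*} {μ : V → V → ℝ} {ν : V → ℝ} {Ω N : Finset V} {p lam : ℝ}
  {u : V → ℝ}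

lemma exists_finset_superset_nbhd (hG : IsWeightedGraph μ ν) (Ω : Finset V) :
    ∃ N : Finset V, Ω ⊆ N ∧ ∀ x ∈ Ω, ∀ y, μ x y ≠ 0 → y ∈ N := by
  classical
  exact ⟨Ω ∪ Ω.biUnion fun x => (hG.locFin x).toFinset, Finset.subset_union_left,
    fun x hx y hxy => Finset.mem_union_right _ (Finset.mem_biUnion.2 ⟨x, hx, by simpa⟩)⟩

lemma mem_of_weight_ne_zero (hΩN : Ω ⊆ N) (hN : ∀ x ∈ Ω, ∀ y, μ x y ≠ 0 → y ∈ N)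
    {w : V → ℝ} (hw : ∀ x ∉ Ω, w x = 0) {x y : V} (hxy : μ x y ≠ 0) (hne : w y ≠ w x) :
    y ∈ N := by
  by_cases hx : x ∈ Ω
  · exact hN x hx y hxy
  by_contra hy
  exact hne (by rw [hw x hx, hw y fun hyΩ => hy (hΩN hyΩ)])

lemma energy_eq_sum (hG : IsWeightedGraph μ ν) (hΩN : Ω ⊆ N)
    (hN : ∀ x ∈ Ω, ∀ y, μ x y ≠ 0 → y ∈ N) (hp : p ≠ 0) {w : V → ℝ}
    (hw : ∀ x ∉ Ω, w x = 0) :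
    energy μ p w = 1 / 2 * ∑ x ∈ N, ∑ y ∈ N, μ x y * |w y - w x| ^ p := by
  have mem_of_ne_zero {x y : V} (h : μ x y * |w y - w x| ^ p ≠ 0) : x ∈ N ∧ y ∈ N := by
    obtain ⟨hxy, hne⟩ := mul_ne_zero_iff.1 h
    have hne : w y ≠ w x := fun h => hne (by simp [h, zero_rpow hp])
    exact ⟨mem_of_weight_ne_zero hΩN hN hw (by rwa [hG.symm]) hne.symm,
      mem_of_weight_ne_zero hΩN hN hw hxy hne⟩
  have inner (x : V) : ∑ᶠ y, μ x y * |w y - w x| ^ p = ∑ y ∈ N, μ x y * |w y - w x| ^ p :=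
    finsum_eq_sum_of_support_subset _ fun y hy => (mem_of_ne_zero hy).2
  rw [energy, finsum_congr inner, finsum_eq_sum_of_support_subset]
  intro x hx
  obtain ⟨y, -, hy⟩ := Finset.exists_ne_zero_of_sum_ne_zero hx
  exact (mem_of_ne_zero hy).1

lemma sum_mul_plap_eq (hG : IsWeightedGraph μ ν) (hΩN : Ω ⊆ N)
    (hN : ∀ x ∈ Ω, ∀ y, μ x y ≠ 0 → y ∈ N) (u : V → ℝ) {w : V → ℝ}
    (hw : ∀ x ∉ Ω, w x = 0) :
    ∑ x ∈ Ω, ν x * plap μ ν p u x * w x = -(1 / 2) * ∑ x ∈ N, ∑ y ∈ N,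
      μ x y * (|u y - u x| ^ (p - 2) * (u y - u x)) * (w y - w x) := by
  have mul_plap (x : V) (hx : x ∈ Ω) :
      ν x * plap μ ν p u x = ∑ y ∈ N, μ x y * (|u y - u x| ^ (p - 2) * (u y - u x)) := by
    rw [plap, ← mul_assoc, mul_one_div_cancel (hG.nuPos x).ne', one_mul]
    exact finsum_eq_sum_of_support_subset _ fun y hy => hN x hx y (left_ne_zero_of_mul hy)
  have extend : ∑ x ∈ Ω, ν x * plap μ ν p u x * w x
      = ∑ x ∈ N, ∑ y ∈ N, μ x y * (|u y - u x| ^ (p - 2) * (u y - u x)) * w x := by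
    rw [← Finset.sum_subset hΩN fun x _ hx => by simp [hw x hx]]
    exact Finset.sum_congr rfl fun x hx => by rw [mul_plap x hx, Finset.sum_mul]
  have antisymm : ∑ x ∈ N, ∑ y ∈ N, μ x y * (|u y - u x| ^ (p - 2) * (u y - u x)) * w x
      = -∑ x ∈ N, ∑ y ∈ N, μ x y * (|u y - u x| ^ (p - 2) * (u y - u x)) * w y := by
    rw [Finset.sum_comm]
    simp only [← Finset.sum_neg_distrib]
    refine Finset.sum_congr rfl fun y _ => Finset.sum_congr rfl fun x _ => ?_
    rw [hG.symm, abs_sub_comm]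
    ring
  simp only [mul_sub _ (w _) (w _), Finset.sum_sub_distrib]
  linarith

lemma energy_abs_le (hG : IsWeightedGraph μ ν) (hp : 0 < p) {v : V → ℝ}
    (hv : ∀ x ∉ Ω, v x = 0) : energy μ p (fun x => |v x|) ≤ energy μ p v := by
  obtain ⟨N, hΩN, hN⟩ := exists_finset_superset_nbhd hG Ω
  rw [energy_eq_sum hG hΩN hN hp.ne' hv, energy_eq_sum hG hΩN hN hp.ne' (by simpa using hv)]
  gcongr 1 / 2 * ∑ x ∈ N, ∑ y ∈ N, μ x y * ?_ ^ p with x _ y _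
  · exact hG.nonneg x y
  · exact abs_abs_sub_abs_le_abs_sub _ _

lemma pnormP_pos (hG : IsWeightedGraph μ ν) {v : V → ℝ} (hv : ∃ x ∈ Ω, v x ≠ 0) :
    0 < pnormP ν Ω p v := by
  obtain ⟨x, hx, hvx⟩ := hv
  refine Finset.sum_pos' (fun y _ => mul_nonneg (by positivity) (hG.nuPos y).le) ⟨x, hx, ?_⟩
  exact mul_pos (rpow_pos_of_pos (abs_pos.2 hvx) p) (hG.nuPos x)

lemma IsDirEigenfun.energy_eq (hG : IsWeightedGraph μ ν) (hp : p ≠ 0)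
    (hu : IsDirEigenfun μ ν Ω p u lam) : energy μ p u = lam * pnormP ν Ω p u := by
  obtain ⟨N, hΩN, hN⟩ := exists_finset_superset_nbhd hG Ω
  have green := sum_mul_plap_eq hG hΩN hN (p := p) u hu.1
  have lhs : ∑ x ∈ Ω, ν x * plap μ ν p u x * u x = -(lam * pnormP ν Ω p u) := by
    rw [pnormP, Finset.mul_sum, ← Finset.sum_neg_distrib]
    refine Finset.sum_congr rfl fun x hx => ?_
    rw [hu.2.2 x hx, ← abs_rpow_sub_two_mul_self_mul_self hp]
    ring
  have rhs : ∑ x ∈ N, ∑ y ∈ N, μ x y * (|u y - u x| ^ (p - 2) * (u y - u x)) * (u y - u x)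
      = ∑ x ∈ N, ∑ y ∈ N, μ x y * |u y - u x| ^ p :=
    Finset.sum_congr rfl fun x _ => Finset.sum_congr rfl fun y _ => by
      rw [mul_assoc, abs_rpow_sub_two_mul_self_mul_self hp]
  rw [energy_eq_sum hG hΩN hN hp hu.1]
  linarith

lemma IsDirEigenfun.mul_pnormP_le_energy (hG : IsWeightedGraph μ ν) (hp : 1 < p)
    (hu : IsDirEigenfun μ ν Ω p u lam) (hpos : ∀ x ∈ Ω, 0 < u x) {v : V → ℝ}
    (hv : ∀ x ∉ Ω, v x = 0) : lam * pnormP ν Ω p v ≤ energy μ p v := by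
  obtain ⟨N, hΩN, hN⟩ := exists_finset_superset_nbhd hG Ω
  set w : V → ℝ := fun x => |v x| ^ p / u x ^ (p - 1)
  have hw (x : V) (hx : x ∉ Ω) : w x = 0 := by
    simp [w, hv x hx, zero_rpow (by linarith : p ≠ 0)]
  have green := sum_mul_plap_eq hG hΩN hN (p := p) u hw
  have lhs : ∑ x ∈ Ω, ν x * plap μ ν p u x * w x = -(lam * pnormP ν Ω p v) := by
    rw [pnormP, Finset.mul_sum, ← Finset.sum_neg_distrib]
    refine Finset.sum_congr rfl fun x hx => ?_
    have hux := hpos x hx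
    have : |u x| ^ (p - 2) * u x = u x ^ (p - 1) := by
      rw [abs_of_pos hux, ← rpow_add_one hux.ne']
      ring_nf
    rw [hu.2.2 x hx, this]
    simp only [w]
    field_simp [(rpow_pos_of_pos hux (p - 1)).ne']
  have abs_eq_zero (x : V) (hux : u x = 0) : |v x| = 0 := by
    rw [hv x fun hx => (hpos x hx).ne' hux, abs_zero]
  have hu0 (x : V) : 0 ≤ u x := by
    by_cases hx : x ∈ Ω
    · exact (hpos x hx).le
    · rw [hu.1 x hx]
  have picone_sum :
      ∑ x ∈ N, ∑ y ∈ N, μ x y * (|u y - u x| ^ (p - 2) * (u y - u x)) * (w y - w x)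
        ≤ ∑ x ∈ N, ∑ y ∈ N, μ x y * |(|v y|) - (|v x|)| ^ p := by
    refine Finset.sum_le_sum fun x _ => Finset.sum_le_sum fun y _ => ?_
    rw [mul_assoc]
    exact mul_le_mul_of_nonneg_left (picone hp (hu0 x) (hu0 y) (abs_nonneg _) (abs_nonneg _)
      (abs_eq_zero x) (abs_eq_zero y)) (hG.nonneg x y)
  calc lam * pnormP ν Ω p v ≤ energy μ p (fun x => |v x|) := by
        rw [energy_eq_sum hG hΩN hN (by linarith) (by simpa using hv)]
        linarith
    _ ≤ energy μ p v := energy_abs_le hG (by linarith) hv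

end Graph

theorem positive_eigenfun_is_first_general {V : Type*} {μ : V → V → ℝ} {ν : V → ℝ}
    (hG : IsWeightedGraph μ ν) {Ω : Finset V}
    {p : ℝ} (hp : 1 < p) {u : V → ℝ} {lam : ℝ}
    (hu : IsDirEigenfun μ ν Ω p u lam) (hpos : ∀ x ∈ Ω, 0 < u x) :
    lam = lam1 μ ν Ω p := by
  rw [lam1]
  refine (IsLeast.csInf_eq ?_).symm
  refine ⟨⟨u, hu.1, hu.2.1, ?_⟩, ?_⟩
  · rw [hu.energy_eq hG (by linarith), mul_div_cancel_right₀ _ (pnormP_pos hG hu.2.1).ne']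
  · rintro _ ⟨v, hv, hv_ne, rfl⟩
    exact (le_div_iff₀ (pnormP_pos hG hv_ne)).2 (hu.mul_pnormP_le_energy hG hp hpos hv)

/-- An eigenfunction of the Dirichlet `p`-Laplacian (`p > 1`) on a finite
connected subset `Ω` which is positive on all of `Ω` is a first eigenfunction, i.e. its
eigenvalue equals `λ_{1,p}(Ω)`. -/
theorem positive_eigenfun_is_first {V : Type*} {μ : V → V → ℝ} {ν : V → ℝ}
    (hG : IsWeightedGraph μ ν) {Ω : Finset V} (hconn : ConnOn μ Ω)
    {p : ℝ} (hp : 1 < p) {u : V → ℝ} {lam : ℝ}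
    (hu : IsDirEigenfun μ ν Ω p u lam) (hpos : ∀ x ∈ Ω, 0 < u x) :
    lam = lam1 μ ν Ω p :=
  positive_eigenfun_is_first_general hG hp hu hpos

end PGraph
end

section
/- Let Ω be a finite connected subset of a weighted graph and p > 1. Then the first eigenfunction of the Dirichlet p-Laplacian on Ω is unique up to scalar multiplication: if u₁ and u₂ are both first eigenfunctions, there exists a nonzero constant c with u₁ = c·u₂. -/
/-!
A first eigenfunction `u` satisfies `E_p(u) = λ₁ ‖u‖ₚᵖ` (Green's formula) and `E_p(|u|) ≤ E_p(u)`,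
so `|u|` also minimises the Rayleigh quotient, and Fermat's rule along the point masses `δ_x` makes
`|u|` a first eigenfunction. At a zero `x` of a nonnegative eigenfunction the equation reads
`∑_y μ_xy φ_p(|u|(y)) = 0`, so the zero spreads to all neighbours: by connectedness `u` has no zero
in `Ω`, and since `E_p(|u|) < E_p(u)` as soon as `u` changes sign along an edge, `u` has constant
sign.

Given a positive eigenfunction `w` and an eigenfunction `u` for the same eigenvalue, let
`t = min_Ω u / w`. Then `u ≥ t w`, with equality at some vertex `x` where `Δ_p u(x) = Δ_p (t w)(x)`.
Since `φ_p(s) = |s|^{p-2} s` is strictly increasing, the two sums agree term by term, so `u = t w`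
at every neighbour of `x`, hence on all of `Ω`.
-/

open scoped BigOperators

namespace PGraph

variable {V : Type*} {μ : V → V → ℝ} {ν : V → ℝ} {Ω : Finset V} {p lam : ℝ} {u v w g : V → ℝ}

noncomputable def signedRpow (p s : ℝ) : ℝ := |s| ^ (p - 2) * s

@[simp]
lemma signedRpow_zero (p : ℝ) : signedRpow p 0 = 0 := by simp [signedRpow]

lemma signedRpow_neg (p s : ℝ) : signedRpow p (-s) = -signedRpow p s := by
  simp [signedRpow]

lemma signedRpow_mul (p a b : ℝ) :
    signedRpow p (a * b) = signedRpow p a * signedRpow p b := by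
  rw [signedRpow, signedRpow, signedRpow, abs_mul,
    Real.mul_rpow (abs_nonneg a) (abs_nonneg b)]
  ring

lemma signedRpow_mul_self (hp : p ≠ 0) (s : ℝ) : signedRpow p s * s = |s| ^ p := by
  rcases eq_or_ne s 0 with rfl | hs
  · simp [Real.zero_rpow hp]
  · have hs' : |s| ≠ 0 := abs_ne_zero.2 hs
    rw [signedRpow, mul_assoc, ← abs_mul_abs_self s, ← mul_assoc,
      ← Real.rpow_add_one hs', ← Real.rpow_add_one hs']
    ring_nf

lemma signedRpow_of_nonneg (hp : 1 < p) {s : ℝ} (hs : 0 ≤ s) :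
    signedRpow p s = s ^ (p - 1) := by
  rcases hs.eq_or_lt with rfl | hs
  · rw [signedRpow_zero, Real.zero_rpow (by linarith)]
  · rw [signedRpow, abs_of_pos hs, ← Real.rpow_add_one hs.ne']
    ring_nf

lemma signedRpow_strictMono (hp : 1 < p) : StrictMono (signedRpow p) := by
  have hpos : ∀ s t : ℝ, 0 ≤ s → s < t → signedRpow p s < signedRpow p t := fun s t hs hst => by
    rw [signedRpow_of_nonneg hp hs, signedRpow_of_nonneg hp (hs.trans hst.le)]
    exact Real.rpow_lt_rpow hs hst (by linarith)
  refine StrictMonoOn.Iic_union_Ici (a := 0) (fun s _ t ht hst => ?_)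
    (fun s hs t _ hst => hpos s t hs hst)
  have := hpos (-t) (-s) (neg_nonneg.2 ht) (neg_lt_neg hst)
  rwa [signedRpow_neg, signedRpow_neg, neg_lt_neg_iff] at this

lemma hasDerivAt_abs_add_mul_rpow (hp : 1 < p) (d e : ℝ) :
    HasDerivAt (fun ε : ℝ => |d + ε * e| ^ p) (p * signedRpow p d * e) 0 := by
  have hinner : HasDerivAt (fun ε : ℝ => d + ε * e) e 0 := by
    simpa using ((hasDerivAt_id (0 : ℝ)).mul_const e).const_add d
  have := (hasDerivAt_abs_rpow d hp).comp_of_eq 0 hinner (by simp)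
  rw [signedRpow, ← mul_assoc]
  exact this

lemma IsDirEigenfun.plap_eq (hu : IsDirEigenfun μ ν Ω p u lam) {x : V} (hx : x ∈ Ω) :
    plap μ ν p u x = -lam * signedRpow p (u x) :=
  hu.2.2 x hx

lemma pnormP_eq_zero (hp : p ≠ 0) (hu : ∀ x ∈ Ω, u x = 0) : pnormP ν Ω p u = 0 :=
  Finset.sum_eq_zero fun x hx => by rw [hu x hx, abs_zero, Real.zero_rpow hp, zero_mul]

lemma hasDerivAt_pnormP_add_smul (hp : 1 < p) (v g : V → ℝ) :
    HasDerivAt (fun ε : ℝ => pnormP ν Ω p (v + ε • g))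
      (p * ∑ x ∈ Ω, g x * (ν x * signedRpow p (v x))) 0 := by
  refine (HasDerivAt.fun_sum fun x (_ : x ∈ Ω) =>
    (hasDerivAt_abs_add_mul_rpow hp (v x) (g x)).mul_const (ν x)).congr_deriv ?_
  rw [Finset.mul_sum]
  exact Finset.sum_congr rfl fun x _ => by ring

lemma plap_const_mul (c : ℝ) (u : V → ℝ) (x : V) :
    plap μ ν p (fun y => c * u y) x = signedRpow p c * plap μ ν p u x := by
  rw [plap, plap, mul_left_comm, mul_finsum _ (signedRpow p c)]
  congr 1
  refine finsum_congr fun y => ?_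
  change μ x y * signedRpow p (c * u y - c * u x) =
    signedRpow p c * (μ x y * signedRpow p (u y - u x))
  rw [← mul_sub, signedRpow_mul]
  ring

namespace IsWeightedGraph

noncomputable def closedNbhd (hG : IsWeightedGraph μ ν) (Ω : Finset V) : Finset V :=
  letI := Classical.decEq V
  Ω ∪ Ω.biUnion fun x => (hG.locFin x).toFinset

lemma subset_closedNbhd (hG : IsWeightedGraph μ ν) : Ω ⊆ hG.closedNbhd Ω := by
  intro x hx
  simp [closedNbhd, hx]

lemma mem_closedNbhd_of_ne_zero (hG : IsWeightedGraph μ ν) {x y : V} (hx : x ∈ Ω)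
    (hxy : μ x y ≠ 0) : y ∈ hG.closedNbhd Ω := by
  classical
  simp only [closedNbhd, Finset.mem_union, Finset.mem_biUnion]
  exact Or.inr ⟨x, hx, by simpa using hxy⟩

lemma mem_closedNbhd_of_mul_ne_zero (hG : IsWeightedGraph μ ν) (hu : ∀ x ∉ Ω, u x = 0) {f : ℝ → ℝ}
    (hf : f 0 = 0) {x y : V} (h : μ x y * f (u y - u x) ≠ 0) :
    x ∈ hG.closedNbhd Ω ∧ y ∈ hG.closedNbhd Ω := by
  have hxy : μ x y ≠ 0 := left_ne_zero_of_mul h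
  by_cases hx : x ∈ Ω
  · exact ⟨hG.subset_closedNbhd hx, hG.mem_closedNbhd_of_ne_zero hx hxy⟩
  have hy : y ∈ Ω := by
    by_contra hy
    rw [hu x hx, hu y hy, sub_zero, hf, mul_zero] at h
    exact h rfl
  exact ⟨hG.mem_closedNbhd_of_ne_zero hy (by rwa [hG.symm]), hG.subset_closedNbhd hy⟩

lemma finsum_eq_sum_closedNbhd (hG : IsWeightedGraph μ ν) (hu : ∀ x ∉ Ω, u x = 0) {f : ℝ → ℝ}
    (hf : f 0 = 0) (x : V) :
    ∑ᶠ y, μ x y * f (u y - u x) = ∑ y ∈ hG.closedNbhd Ω, μ x y * f (u y - u x) :=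
  finsum_eq_finsetSum_of_support_subset _ fun _ h =>
    (hG.mem_closedNbhd_of_mul_ne_zero hu hf h).2

lemma energy_eq_sum (hG : IsWeightedGraph μ ν) (hp : p ≠ 0) (hu : ∀ x ∉ Ω, u x = 0) :
    energy μ p u =
      1 / 2 * ∑ x ∈ hG.closedNbhd Ω, ∑ y ∈ hG.closedNbhd Ω, μ x y * |u y - u x| ^ p := by
  have hf : |(0 : ℝ)| ^ p = 0 := by rw [abs_zero, Real.zero_rpow hp]
  rw [energy, finsum_congr (hG.finsum_eq_sum_closedNbhd hu (f := fun d => |d| ^ p) hf),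
    finsum_eq_finsetSum_of_support_subset]
  intro x hx
  obtain ⟨y, -, hy⟩ := Finset.exists_ne_zero_of_sum_ne_zero hx
  exact (hG.mem_closedNbhd_of_mul_ne_zero hu (f := fun d => |d| ^ p) hf hy).1

lemma nu_mul_plap (hG : IsWeightedGraph μ ν) (hu : ∀ x ∉ Ω, u x = 0) (x : V) :
    ν x * plap μ ν p u x =
      ∑ y ∈ hG.closedNbhd Ω, μ x y * signedRpow p (u y - u x) := by
  rw [plap, ← mul_assoc, mul_one_div_cancel (hG.nuPos x).ne', one_mul]
  exact hG.finsum_eq_sum_closedNbhd hu (signedRpow_zero p) x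

lemma green_identity (hG : IsWeightedGraph μ ν) (hu : ∀ x ∉ Ω, u x = 0) (hg : ∀ x ∉ Ω, g x = 0) :
    ∑ x ∈ hG.closedNbhd Ω, ∑ y ∈ hG.closedNbhd Ω,
        μ x y * signedRpow p (u y - u x) * (g y - g x) =
      -2 * ∑ x ∈ Ω, g x * (ν x * plap μ ν p u x) := by
  set T := hG.closedNbhd Ω
  have hswap : ∑ x ∈ T, ∑ y ∈ T, μ x y * signedRpow p (u y - u x) * g y =
      -∑ x ∈ T, ∑ y ∈ T, μ x y * signedRpow p (u y - u x) * g x := by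
    rw [Finset.sum_comm, ← Finset.sum_neg_distrib]
    refine Finset.sum_congr rfl fun y _ => ?_
    rw [← Finset.sum_neg_distrib]
    refine Finset.sum_congr rfl fun x _ => ?_
    rw [hG.symm, ← neg_sub, signedRpow_neg]
    ring
  have hrestrict : ∑ x ∈ T, ∑ y ∈ T, μ x y * signedRpow p (u y - u x) * g x =
      ∑ x ∈ Ω, g x * (ν x * plap μ ν p u x) := by
    rw [← Finset.sum_subset hG.subset_closedNbhd fun x _ hx => by simp [hg x hx]]
    refine Finset.sum_congr rfl fun x _ => ?_
    rw [hG.nu_mul_plap hu, Finset.mul_sum]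
    exact Finset.sum_congr rfl fun y _ => by ring
  simp only [mul_sub, Finset.sum_sub_distrib]
  rw [hswap, hrestrict]
  ring

lemma energy_nonneg (hG : IsWeightedGraph μ ν) (p : ℝ) (u : V → ℝ) : 0 ≤ energy μ p u :=
  mul_nonneg (by norm_num) <| finsum_nonneg fun x => finsum_nonneg fun y =>
    mul_nonneg (hG.nonneg x y) (Real.rpow_nonneg (abs_nonneg _) _)

lemma pnormP_nonneg (hG : IsWeightedGraph μ ν) (Ω : Finset V) (p : ℝ) (u : V → ℝ) :
    0 ≤ pnormP ν Ω p u :=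
  Finset.sum_nonneg fun x _ => mul_nonneg (Real.rpow_nonneg (abs_nonneg _) _) (hG.nuPos x).le

lemma pnormP_pos (hG : IsWeightedGraph μ ν) (hne : ∃ x ∈ Ω, u x ≠ 0) : 0 < pnormP ν Ω p u := by
  obtain ⟨x, hx, hux⟩ := hne
  refine Finset.sum_pos' (fun y _ => ?_) ⟨x, hx, ?_⟩
  · exact mul_nonneg (Real.rpow_nonneg (abs_nonneg _) _) (hG.nuPos y).le
  · exact mul_pos (Real.rpow_pos_of_pos (abs_pos.2 hux) _) (hG.nuPos x)

lemma lam1_mul_pnormP_le_energy (hG : IsWeightedGraph μ ν) (hp : p ≠ 0) (hu : ∀ x ∉ Ω, u x = 0) :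
    lam1 μ ν Ω p * pnormP ν Ω p u ≤ energy μ p u := by
  by_cases hne : ∃ x ∈ Ω, u x ≠ 0
  · rw [← le_div_iff₀ (hG.pnormP_pos hne)]
    refine csInf_le ⟨0, ?_⟩ ⟨u, hu, hne, rfl⟩
    rintro t ⟨v, -, -, rfl⟩
    exact div_nonneg (hG.energy_nonneg p v) (hG.pnormP_nonneg Ω p v)
  · push Not at hne
    rw [pnormP_eq_zero hp hne, mul_zero]
    exact hG.energy_nonneg p u

lemma energy_eq_of_isDirEigenfun (hG : IsWeightedGraph μ ν) (hp : p ≠ 0)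
    (hu : IsDirEigenfun μ ν Ω p u lam) : energy μ p u = lam * pnormP ν Ω p u := by
  have hgreen := hG.green_identity (p := p) hu.1 hu.1
  simp only [mul_assoc, signedRpow_mul_self hp] at hgreen
  calc energy μ p u = -∑ x ∈ Ω, u x * (ν x * plap μ ν p u x) := by
        rw [hG.energy_eq_sum hp hu.1, hgreen]
        ring
    _ = lam * pnormP ν Ω p u := by
        rw [pnormP, Finset.mul_sum, ← Finset.sum_neg_distrib]
        refine Finset.sum_congr rfl fun x hx => ?_
        rw [hu.plap_eq hx, ← signedRpow_mul_self hp (u x)]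
        ring

lemma hasDerivAt_energy_add_smul (hG : IsWeightedGraph μ ν) (hp : 1 < p) (hv : ∀ x ∉ Ω, v x = 0)
    (hg : ∀ x ∉ Ω, g x = 0) :
    HasDerivAt (fun ε : ℝ => energy μ p (v + ε • g))
      (-p * ∑ x ∈ Ω, g x * (ν x * plap μ ν p v x)) 0 := by
  have hsupp (ε : ℝ) : ∀ x ∉ Ω, (v + ε • g) x = 0 := fun x hx => by simp [hv x hx, hg x hx]
  have hfun : (fun ε : ℝ => energy μ p (v + ε • g)) = fun ε => 1 / 2 *
      ∑ x ∈ hG.closedNbhd Ω, ∑ y ∈ hG.closedNbhd Ω,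
        μ x y * |v y - v x + ε * (g y - g x)| ^ p := by
    funext ε
    rw [hG.energy_eq_sum (by linarith) (hsupp ε)]
    refine congrArg _ (Finset.sum_congr rfl fun x _ => Finset.sum_congr rfl fun y _ => ?_)
    simp only [Pi.add_apply, Pi.smul_apply, smul_eq_mul]
    ring_nf
  rw [hfun]
  refine ((HasDerivAt.fun_sum fun x _ => HasDerivAt.fun_sum fun y _ =>
    (hasDerivAt_abs_add_mul_rpow hp (v y - v x) (g y - g x)).const_mul (μ x y)).const_mul
      (1 / 2 : ℝ)).congr_deriv ?_
  rw [show -p * ∑ x ∈ Ω, g x * (ν x * plap μ ν p v x) =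
      p / 2 * (-2 * ∑ x ∈ Ω, g x * (ν x * plap μ ν p v x)) by ring,
    ← hG.green_identity hv hg, Finset.mul_sum, Finset.mul_sum]
  refine Finset.sum_congr rfl fun x _ => ?_
  rw [Finset.mul_sum, Finset.mul_sum]
  exact Finset.sum_congr rfl fun y _ => by ring

theorem isDirEigenfun_of_energy_eq (hG : IsWeightedGraph μ ν) (hp : 1 < p)
    (hv : ∀ x ∉ Ω, v x = 0) (hne : ∃ x ∈ Ω, v x ≠ 0)
    (hE : energy μ p v = lam1 μ ν Ω p * pnormP ν Ω p v) :
    IsDirEigenfun μ ν Ω p v (lam1 μ ν Ω p) := by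
  classical
  refine ⟨hv, hne, fun x hx => ?_⟩
  set lam := lam1 μ ν Ω p
  have hg : ∀ y ∉ Ω, (Pi.single x 1 : V → ℝ) y = 0 := fun y hy =>
    Pi.single_eq_of_ne (by rintro rfl; exact hy hx) _
  have hmin : IsLocalMin (fun ε : ℝ => energy μ p (v + ε • Pi.single x 1) -
      lam * pnormP ν Ω p (v + ε • Pi.single x 1)) 0 :=
    Filter.Eventually.of_forall fun ε => by
      dsimp only
      rw [zero_smul, add_zero, hE, sub_self, sub_nonneg]
      exact hG.lam1_mul_pnormP_le_energy (by linarith) fun y hy => by simp [hv y hy, hg y hy]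
  have hderiv := hmin.hasDerivAt_eq_zero ((hG.hasDerivAt_energy_add_smul hp hv hg).sub
    ((hasDerivAt_pnormP_add_smul hp v (Pi.single x 1)).const_mul lam))
  simp only [Pi.single_apply, ite_mul, one_mul, zero_mul, Finset.sum_ite_eq', if_pos hx]
    at hderiv
  refine mul_left_cancel₀ (mul_ne_zero (hG.nuPos x).ne' (by linarith : p ≠ 0)) ?_
  change _ = ν x * p * (-lam * signedRpow p (v x))
  linear_combination -hderiv

lemma energy_le_energy_of_abs_sub_le (hG : IsWeightedGraph μ ν) (hp : 0 < p)
    (hu : ∀ x ∉ Ω, u x = 0) (hw : ∀ x ∉ Ω, w x = 0)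
    (h : ∀ x y, |w y - w x| ≤ |u y - u x|) : energy μ p w ≤ energy μ p u := by
  have hterm (a b : V) : μ a b * |w b - w a| ^ p ≤ μ a b * |u b - u a| ^ p :=
    mul_le_mul_of_nonneg_left (Real.rpow_le_rpow (abs_nonneg _) (h a b) hp.le) (hG.nonneg a b)
  rw [hG.energy_eq_sum hp.ne' hw, hG.energy_eq_sum hp.ne' hu]
  exact mul_le_mul_of_nonneg_left (Finset.sum_le_sum fun a _ => Finset.sum_le_sum fun b _ =>
    hterm a b) one_half_pos.le

lemma energy_lt_energy_of_abs_sub_lt (hG : IsWeightedGraph μ ν) (hp : 0 < p)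
    (hu : ∀ x ∉ Ω, u x = 0) (hw : ∀ x ∉ Ω, w x = 0)
    (h : ∀ x y, |w y - w x| ≤ |u y - u x|) {x y : V} (hx : x ∈ Ω) (hxy : 0 < μ x y)
    (hlt : |w y - w x| < |u y - u x|) : energy μ p w < energy μ p u := by
  have hterm (a b : V) : μ a b * |w b - w a| ^ p ≤ μ a b * |u b - u a| ^ p :=
    mul_le_mul_of_nonneg_left (Real.rpow_le_rpow (abs_nonneg _) (h a b) hp.le) (hG.nonneg a b)
  rw [hG.energy_eq_sum hp.ne' hw, hG.energy_eq_sum hp.ne' hu]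
  refine mul_lt_mul_of_pos_left (Finset.sum_lt_sum (fun a _ => Finset.sum_le_sum fun b _ =>
    hterm a b) ⟨x, hG.subset_closedNbhd hx, Finset.sum_lt_sum (fun b _ => hterm x b)
      ⟨y, hG.mem_closedNbhd_of_ne_zero hx hxy.ne', ?_⟩⟩) one_half_pos
  exact mul_lt_mul_of_pos_left (Real.rpow_lt_rpow (abs_nonneg _) hlt hp) hxy

lemma eq_of_le_of_plap_eq (hG : IsWeightedGraph μ ν) (hp : 1 < p) (hu : ∀ x ∉ Ω, u x = 0)
    (hw : ∀ x ∉ Ω, w x = 0) (hle : ∀ y, w y ≤ u y) {x y : V}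
    (hx : x ∈ Ω) (hxeq : u x = w x) (hplap : plap μ ν p u x = plap μ ν p w x)
    (hxy : 0 < μ x y) : u y = w y := by
  have hsum : ∑ b ∈ hG.closedNbhd Ω, μ x b * signedRpow p (w b - w x) =
      ∑ b ∈ hG.closedNbhd Ω, μ x b * signedRpow p (u b - u x) := by
    rw [← hG.nu_mul_plap hw, ← hG.nu_mul_plap hu, hplap]
  have hterm : ∀ b ∈ hG.closedNbhd Ω,
      μ x b * signedRpow p (w b - w x) ≤ μ x b * signedRpow p (u b - u x) := fun b _ =>
    mul_le_mul_of_nonneg_left ((signedRpow_strictMono hp).monotone (by linarith [hle b]))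
      (hG.nonneg x b)
  have hy := (Finset.sum_eq_sum_iff_of_le hterm).1 hsum y
    (hG.mem_closedNbhd_of_ne_zero hx hxy.ne')
  have := (signedRpow_strictMono hp).injective (mul_left_cancel₀ hxy.ne' hy)
  linarith

end IsWeightedGraph

lemma ConnOn.forall_of_adj (hconn : ConnOn μ Ω) {P : V → Prop}
    (hP : ∀ a ∈ Ω, ∀ b ∈ Ω, 0 < μ a b → P a → P b) {x₀ : V} (hx₀ : x₀ ∈ Ω) (h₀ : P x₀) :
    ∀ x ∈ Ω, P x := by
  intro x hx
  induction hconn x₀ hx₀ x hx with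
  | refl => exact h₀
  | tail _ hab ih => exact hP _ hab.1 _ hab.2.1 hab.2.2 (ih hab.1)

namespace IsDirEigenfun

lemma const_mul (hu : IsDirEigenfun μ ν Ω p u lam) {c : ℝ} (hc : c ≠ 0) :
    IsDirEigenfun μ ν Ω p (fun x => c * u x) lam := by
  obtain ⟨x₀, hx₀, hux₀⟩ := hu.2.1
  refine ⟨fun x hx => by simp [hu.1 x hx], ⟨x₀, hx₀, mul_ne_zero hc hux₀⟩,
    fun x hx => ?_⟩
  change _ = -lam * signedRpow p (c * u x)
  rw [plap_const_mul, hu.plap_eq hx, signedRpow_mul]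
  ring

lemma eq_zero_of_adj (hu : IsDirEigenfun μ ν Ω p u lam) (hG : IsWeightedGraph μ ν)
    (hp : 1 < p) (hu0 : ∀ x, 0 ≤ u x) {x y : V} (hx : x ∈ Ω) (hux : u x = 0)
    (hxy : 0 < μ x y) : u y = 0 := by
  have hsum := hG.nu_mul_plap (p := p) hu.1 x
  rw [hu.plap_eq hx, hux, signedRpow_zero, mul_zero, mul_zero] at hsum
  simp only [sub_zero] at hsum
  have hterm := (Finset.sum_eq_zero_iff_of_nonneg fun b _ => mul_nonneg (hG.nonneg x b)
    (by simpa using (signedRpow_strictMono hp).monotone (hu0 b))).1 hsum.symm y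
    (hG.mem_closedNbhd_of_ne_zero hx hxy.ne')
  have := (mul_eq_zero.1 hterm).resolve_left hxy.ne'
  exact (signedRpow_strictMono hp).injective (this.trans (signedRpow_zero p).symm)

lemma abs (hu : IsDirEigenfun μ ν Ω p u (lam1 μ ν Ω p)) (hG : IsWeightedGraph μ ν)
    (hp : 1 < p) : IsDirEigenfun μ ν Ω p (fun x => |u x|) (lam1 μ ν Ω p) := by
  have hsupp : ∀ x ∉ Ω, |u x| = 0 := fun x hx => by rw [hu.1 x hx, abs_zero]
  obtain ⟨x, hx, hux⟩ := hu.2.1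
  refine hG.isDirEigenfun_of_energy_eq hp hsupp ⟨x, hx, abs_ne_zero.2 hux⟩
    (le_antisymm ?_ (hG.lam1_mul_pnormP_le_energy (p := p) (by linarith) hsupp))
  calc energy μ p (fun x => |u x|) ≤ energy μ p u :=
        hG.energy_le_energy_of_abs_sub_le (by linarith) hu.1 hsupp fun x y =>
          abs_abs_sub_abs_le_abs_sub _ _
    _ = _ := by simp only [hG.energy_eq_of_isDirEigenfun (by linarith) hu, pnormP, abs_abs]

lemma not_neg_of_adj_of_pos (hu : IsDirEigenfun μ ν Ω p u (lam1 μ ν Ω p))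
    (hG : IsWeightedGraph μ ν) (hp : 1 < p) {x y : V} (hxy : 0 < μ x y) (hx : 0 < u x) :
    ¬u y < 0 := by
  intro hy
  have hxΩ : x ∈ Ω := by_contra fun h => hx.ne' (hu.1 x h)
  have hsupp : ∀ x ∉ Ω, |u x| = 0 := fun x hx => by rw [hu.1 x hx, abs_zero]
  have hlt := hG.energy_lt_energy_of_abs_sub_lt (p := p) (by linarith) hu.1 hsupp
    (fun a b => abs_abs_sub_abs_le_abs_sub _ _) hxΩ hxy (by
      rw [abs_of_pos hx, abs_of_neg hy, abs_of_neg (by linarith : u y - u x < 0), abs_lt]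
      constructor <;> linarith)
  have hle := hG.lam1_mul_pnormP_le_energy (p := p) (by linarith) hsupp
  simp only [pnormP, abs_abs] at hle
  rw [← pnormP, ← hG.energy_eq_of_isDirEigenfun (by linarith) hu] at hle
  linarith

lemma ne_zero (hu : IsDirEigenfun μ ν Ω p u (lam1 μ ν Ω p)) (hG : IsWeightedGraph μ ν)
    (hconn : ConnOn μ Ω) (hp : 1 < p) : ∀ x ∈ Ω, u x ≠ 0 := by
  obtain ⟨x₀, hx₀, hux₀⟩ := hu.2.1
  refine hconn.forall_of_adj (fun a _ b hb hab hua hub => hua ?_) hx₀ hux₀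
  exact abs_eq_zero.1 ((hu.abs hG hp).eq_zero_of_adj hG hp (fun _ => abs_nonneg _) hb
    (by simp [hub]) (by rwa [hG.symm]))

lemma mul_pos_of_adj (hu : IsDirEigenfun μ ν Ω p u (lam1 μ ν Ω p)) (hG : IsWeightedGraph μ ν)
    (hconn : ConnOn μ Ω) (hp : 1 < p) {x y : V} (hx : x ∈ Ω) (hy : y ∈ Ω)
    (hxy : 0 < μ x y) : 0 < u x * u y := by
  rcases (hu.ne_zero hG hconn hp x hx).lt_or_gt with hx' | hx' <;>
    rcases (hu.ne_zero hG hconn hp y hy).lt_or_gt with hy' | hy'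
  · exact mul_pos_of_neg_of_neg hx' hy'
  · exact absurd hx' (hu.not_neg_of_adj_of_pos hG hp (by rwa [hG.symm]) hy')
  · exact absurd hy' (hu.not_neg_of_adj_of_pos hG hp hxy hx')
  · exact mul_pos hx' hy'

lemma exists_mul_pos (hu : IsDirEigenfun μ ν Ω p u (lam1 μ ν Ω p)) (hG : IsWeightedGraph μ ν)
    (hconn : ConnOn μ Ω) (hp : 1 < p) : ∃ s ≠ 0, ∀ x ∈ Ω, 0 < s * u x := by
  obtain ⟨x₀, hx₀, hux₀⟩ := hu.2.1
  refine ⟨u x₀, hux₀, hconn.forall_of_adj (fun a ha b hb hab hsa => ?_) hx₀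
    (mul_self_pos.2 hux₀)⟩
  nlinarith [mul_pos hsa (hu.mul_pos_of_adj hG hconn hp ha hb hab), sq_nonneg (u a)]

lemma exists_eq_mul_of_pos (hu : IsDirEigenfun μ ν Ω p u lam) (hw : IsDirEigenfun μ ν Ω p w lam)
    (hG : IsWeightedGraph μ ν) (hconn : ConnOn μ Ω) (hp : 1 < p) (hwpos : ∀ x ∈ Ω, 0 < w x) : ∃ t : ℝ, ∀ x, u x = t * w x := by
  obtain ⟨x₀, hx₀, hmin⟩ := Ω.exists_min_image (fun x => u x / w x)
    (let ⟨x, hx, _⟩ := hw.2.1; ⟨x, hx⟩)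
  set t := u x₀ / w x₀
  have htw : ∀ x ∉ Ω, t * w x = 0 := fun x hx => by rw [hw.1 x hx, mul_zero]
  have hle : ∀ y, t * w y ≤ u y := fun y => by
    by_cases hy : y ∈ Ω
    · exact (le_div_iff₀ (hwpos y hy)).1 (hmin y hy)
    · rw [htw y hy, hu.1 y hy]
  have hΩ := hconn.forall_of_adj (P := fun x => u x = t * w x)
    (fun a ha b _ hab hua => hG.eq_of_le_of_plap_eq hp hu.1 htw hle ha hua
      (by rw [plap_const_mul, hu.plap_eq ha, hw.plap_eq ha, hua, signedRpow_mul]; ring) hab)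
    hx₀ (div_mul_cancel₀ _ (hwpos x₀ hx₀).ne').symm
  refine ⟨t, fun x => ?_⟩
  by_cases hx : x ∈ Ω
  · exact hΩ x hx
  · rw [hu.1 x hx, htw x hx]

end IsDirEigenfun

end PGraph

namespace PGraph

/-- The first eigenfunction of the Dirichlet `p`-Laplacian (`p > 1`) on a
finite connected subset `Ω` is unique up to scalar multiplication. -/
theorem first_eigenfun_unique {V : Type*} {μ : V → V → ℝ} {ν : V → ℝ}
    (hG : IsWeightedGraph μ ν) {Ω : Finset V} (hconn : ConnOn μ Ω)
    {p : ℝ} (hp : 1 < p) {u₁ u₂ : V → ℝ}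
    (hu₁ : IsDirEigenfun μ ν Ω p u₁ (lam1 μ ν Ω p))
    (hu₂ : IsDirEigenfun μ ν Ω p u₂ (lam1 μ ν Ω p)) :
    ∃ c : ℝ, c ≠ 0 ∧ ∀ x, u₁ x = c * u₂ x := by
  obtain ⟨s, hs, hpos⟩ := hu₂.exists_mul_pos hG hconn hp
  obtain ⟨t, ht⟩ := hu₁.exists_eq_mul_of_pos (hu₂.const_mul hs) hG hconn hp hpos
  obtain ⟨x, -, hx⟩ := hu₁.2.1
  refine ⟨t * s, fun hts => hx ?_, fun y => by rw [ht y, mul_assoc]⟩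
  rw [ht x, ← mul_assoc, hts, zero_mul]

end PGraph
end

section
/- Let Ω be a finite subset of a weighted graph G = (V,E,ν,μ). Then the first eigenvalue of the Dirichlet 1-Laplacian equals the Dirichlet Cheeger constant: λ_{1,1}(Ω) = h_{μ,ν}(Ω), where λ_{1,1}(Ω) = inf_{u ≢ 0, u ∈ ℝ^Ω} E₁(u)/‖u‖_{1,Ω} and h_{μ,ν}(Ω) = min over nonempty U ⊆ Ω of |∂U|_μ / |U|_ν. -/
open scoped BigOperators

namespace PGraph

section Aux

variable {V : Type*} {μ : V → V → ℝ} {ν : V → ℝ} {Ω T : Finset V}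

open Classical in
private noncomputable def eU (U : Finset V) : V → ℝ := fun x => if x ∈ U then (1:ℝ) else 0

open Classical in
private theorem eU_mem {U : Finset V} {x : V} (h : x ∈ U) : eU U x = 1 := by simp [eU, h]

open Classical in
private theorem eU_notMem {U : Finset V} {x : V} (h : x ∉ U) : eU U x = 0 := by
  simp [eU, h]

private theorem energy_one_eq_sum (hG : IsWeightedGraph μ ν)
    (hΩT : Ω ⊆ T) (hnbr : ∀ x ∈ Ω, Function.support (μ x) ⊆ (T : Set V))
    {u : V → ℝ} (hu : ∀ x, x ∉ Ω → u x = 0) :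
    energy μ 1 u = (1 / 2) * ∑ x ∈ T, ∑ y ∈ T, μ x y * |u y - u x| := by
  unfold energy
  have hin : ∀ x, (∑ᶠ y : V, μ x y * |u y - u x| ^ (1:ℝ))
      = ∑ y ∈ T, μ x y * |u y - u x| ^ (1:ℝ) := by
    intro x
    apply finsum_eq_sum_of_support_subset
    intro y hy
    have hμ : μ x y ≠ 0 := fun h => hy (by simp [h])
    have huy : u y ≠ u x := by
      intro h; apply hy; simp [h]
    by_cases hx : x ∈ Ω
    · exact hnbr x hx hμ
    · have h1 : u y ≠ 0 := by rw [hu x hx] at huy; exact huy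
      have h2 : y ∈ Ω := by by_contra hc; exact h1 (hu y hc)
      exact hΩT h2
  have hout : (∑ᶠ x : V, ∑ᶠ y : V, μ x y * |u y - u x| ^ (1:ℝ))
      = ∑ x ∈ T, ∑ y ∈ T, μ x y * |u y - u x| ^ (1:ℝ) := by
    rw [funext hin]
    apply finsum_eq_sum_of_support_subset
    intro x hx
    by_contra hxT
    apply hx
    have hxΩ : x ∉ Ω := fun h => hxT (hΩT h)
    have hux : u x = 0 := hu x hxΩ
    apply Finset.sum_eq_zero
    intro y _
    rcases eq_or_ne (μ x y) 0 with h | h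
    · simp [h]
    rcases eq_or_ne (u y) 0 with h' | h'
    · simp [h', hux]
    exfalso
    have hyΩ : y ∈ Ω := by by_contra hc; exact h' (hu y hc)
    have : x ∈ Function.support (μ y) := by
      simp only [Function.mem_support, hG.symm y x]; exact h
    exact hxT (hnbr y hyΩ this)
  rw [hout]
  simp [Real.rpow_one]

open Classical in
private theorem bdryWt_eq_sum (hnbr : ∀ x ∈ Ω, Function.support (μ x) ⊆ (T : Set V))
    {U : Finset V} (hU : U ⊆ Ω) :
    bdryWt μ U = ∑ x ∈ U, ∑ y ∈ T \ U, μ x y := by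
  unfold bdryWt
  refine Finset.sum_congr rfl fun x hx => ?_
  apply finsum_mem_eq_sum_of_inter_support_eq
  ext y
  simp only [Set.mem_inter_iff, Set.mem_setOf_eq, Finset.coe_sdiff, Set.mem_diff,
    Finset.mem_coe, Function.mem_support]
  constructor
  · rintro ⟨hyU, hμ⟩
    exact ⟨⟨hnbr x (hU hx) hμ, hyU⟩, hμ⟩
  · rintro ⟨⟨_, hyU⟩, hμ⟩
    exact ⟨hyU, hμ⟩

open Classical in
private theorem bdryWt_nonneg (hG : IsWeightedGraph μ ν)
    (hnbr : ∀ x ∈ Ω, Function.support (μ x) ⊆ (T : Set V))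
    {U : Finset V} (hU : U ⊆ Ω) : 0 ≤ bdryWt μ U := by
  rw [bdryWt_eq_sum hnbr hU]
  exact Finset.sum_nonneg fun x _ => Finset.sum_nonneg fun y _ => hG.nonneg x y

open Classical in
private theorem energy_indicator (hG : IsWeightedGraph μ ν)
    (hΩT : Ω ⊆ T) (hnbr : ∀ x ∈ Ω, Function.support (μ x) ⊆ (T : Set V))
    {U : Finset V} (hU : U ⊆ Ω) :
    energy μ 1 (eU U) = bdryWt μ U := by
  have hUT : U ⊆ T := hU.trans hΩT
  rw [energy_one_eq_sum hG hΩT hnbr (fun x hx => eU_notMem (fun h => hx (hU h))),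
    bdryWt_eq_sum hnbr hU]
  have hrow : ∀ x, (∑ y ∈ T, μ x y * |eU U y - eU U x|)
      = (∑ y ∈ T \ U, μ x y * |eU U y - eU U x|) + ∑ y ∈ U, μ x y * |eU U y - eU U x| :=
    fun x => (Finset.sum_sdiff hUT).symm
  have key : (∑ x ∈ T, ∑ y ∈ T, μ x y * |eU U y - eU U x|)
      = (∑ x ∈ T \ U, ∑ y ∈ U, μ x y) + ∑ x ∈ U, ∑ y ∈ T \ U, μ x y := by
    rw [← Finset.sum_sdiff hUT]
    congr 1
    · refine Finset.sum_congr rfl fun x hx => ?_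
      have hx' : x ∉ U := (Finset.mem_sdiff.mp hx).2
      rw [hrow x]
      have h2 : (∑ y ∈ U, μ x y * |eU U y - eU U x|) = ∑ y ∈ U, μ x y := by
        refine Finset.sum_congr rfl fun y hy => ?_
        rw [eU_mem hy, eU_notMem hx']; simp
      have h1 : (∑ y ∈ T \ U, μ x y * |eU U y - eU U x|) = 0 := by
        refine Finset.sum_eq_zero fun y hy => ?_
        rw [eU_notMem (Finset.mem_sdiff.mp hy).2, eU_notMem hx']; simp
      rw [h1, h2, zero_add]
    · refine Finset.sum_congr rfl fun x hx => ?_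
      rw [hrow x]
      have h2 : (∑ y ∈ U, μ x y * |eU U y - eU U x|) = 0 := by
        refine Finset.sum_eq_zero fun y hy => ?_
        rw [eU_mem hy, eU_mem hx]; simp
      have h1 : (∑ y ∈ T \ U, μ x y * |eU U y - eU U x|) = ∑ y ∈ T \ U, μ x y := by
        refine Finset.sum_congr rfl fun y hy => ?_
        rw [eU_notMem (Finset.mem_sdiff.mp hy).2, eU_mem hx]; simp
      rw [h1, h2, add_zero]
  have hsymm : (∑ x ∈ T \ U, ∑ y ∈ U, μ x y) = ∑ x ∈ U, ∑ y ∈ T \ U, μ x y := by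
    rw [Finset.sum_comm]
    exact Finset.sum_congr rfl fun x _ => Finset.sum_congr rfl fun y _ => hG.symm y x
  rw [key, hsymm]
  ring

private theorem pnorm_one_eq (u : V → ℝ) :
    pnormP ν Ω 1 u = ∑ x ∈ Ω, |u x| * ν x := by
  unfold pnormP
  simp [Real.rpow_one]

open Classical in
private theorem pnorm_indicator {U : Finset V} (hU : U ⊆ Ω) :
    pnormP ν Ω 1 (eU U) = ∑ x ∈ U, ν x := by
  rw [pnorm_one_eq]
  rw [← Finset.sum_sdiff hU]
  have h1 : (∑ x ∈ Ω \ U, |eU U x| * ν x) = 0 :=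
    Finset.sum_eq_zero fun x hx => by rw [eU_notMem (Finset.mem_sdiff.mp hx).2]; simp
  have h2 : (∑ x ∈ U, |eU U x| * ν x) = ∑ x ∈ U, ν x :=
    Finset.sum_congr rfl fun x hx => by rw [eU_mem hx]; simp
  rw [h1, h2, zero_add]

private theorem cheeger_nonneg (hG : IsWeightedGraph μ ν) (Ω : Finset V) :
    ∀ t ∈ {t : ℝ | ∃ U : Finset V, U ⊆ Ω ∧ U.Nonempty ∧
      t = bdryWt μ U / ∑ x ∈ U, ν x}, (0:ℝ) ≤ t := by
  classical
  rintro t ⟨U, hUΩ, hUne, rfl⟩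
  set T : Finset V := Ω ∪ Ω.biUnion (fun x => (hG.locFin x).toFinset) with hT
  have hnbr : ∀ x ∈ Ω, Function.support (μ x) ⊆ (T : Set V) := by
    intro x hx y hy
    simp only [hT, Finset.coe_union, Set.mem_union, Finset.coe_biUnion, Finset.mem_coe,
      Set.mem_iUnion]
    exact Or.inr ⟨x, hx, (hG.locFin x).mem_toFinset.mpr hy⟩
  have hb := bdryWt_nonneg (T := T) hG hnbr hUΩ
  have hv : (0:ℝ) ≤ ∑ x ∈ U, ν x :=
    Finset.sum_nonneg fun x _ => (hG.nuPos x).le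
  exact div_nonneg hb hv

open Classical in
private theorem sum_eU {U : Finset V} (hU : U ⊆ Ω) :
    (∑ x ∈ Ω, eU U x * ν x) = ∑ x ∈ U, ν x := by
  rw [← Finset.sum_sdiff hU]
  have h1 : (∑ x ∈ Ω \ U, eU U x * ν x) = 0 :=
    Finset.sum_eq_zero fun x hx => by rw [eU_notMem (Finset.mem_sdiff.mp hx).2]; simp
  have h2 : (∑ x ∈ U, eU U x * ν x) = ∑ x ∈ U, ν x :=
    Finset.sum_congr rfl fun x hx => by rw [eU_mem hx]; simp
  rw [h1, h2, zero_add]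

open Classical in
private theorem energy_ge_cheeger_mul (hG : IsWeightedGraph μ ν)
    (hΩT : Ω ⊆ T) (hnbr : ∀ x ∈ Ω, Function.support (μ x) ⊆ (T : Set V)) :
    ∀ n : ℕ, ∀ u : V → ℝ, (∀ x, 0 ≤ u x) → (∀ x, x ∉ Ω → u x = 0) →
      (Ω.filter (fun x => u x ≠ 0)).card ≤ n →
      cheeger μ ν Ω * pnormP ν Ω 1 u ≤ energy μ 1 u := by
  have hzero : ∀ u : V → ℝ, (∀ x, u x = 0) →
      cheeger μ ν Ω * pnormP ν Ω 1 u ≤ energy μ 1 u := by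
    intro u huz
    have hE : energy μ 1 u = 0 := by
      rw [energy_one_eq_sum hG hΩT hnbr (fun x _ => huz x)]
      rw [Finset.sum_eq_zero fun x _ =>
        Finset.sum_eq_zero fun y _ => by rw [huz x, huz y]; simp]
      ring
    have hP : pnormP ν Ω 1 u = 0 := by
      rw [pnorm_one_eq]
      exact Finset.sum_eq_zero fun x _ => by rw [huz x]; simp
    rw [hE, hP, mul_zero]
  intro n
  induction n with
  | zero =>
    intro u hu0 husupp hcard
    apply hzero
    intro x
    by_cases hx : x ∈ Ω
    · by_contra hne
      have : x ∈ Ω.filter (fun x => u x ≠ 0) := Finset.mem_filter.mpr ⟨hx, hne⟩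
      have := Finset.card_pos.mpr ⟨x, this⟩
      omega
    · exact husupp x hx
  | succ n ih =>
    intro u hu0 husupp hcard
    set U := Ω.filter (fun x => u x ≠ 0) with hUdef
    by_cases hUe : U = ∅
    · apply hzero
      intro x
      by_cases hx : x ∈ Ω
      · by_contra hne
        have : x ∈ U := Finset.mem_filter.mpr ⟨hx, hne⟩
        simp [hUe] at this
      · exact husupp x hx
    have hUne : U.Nonempty := Finset.nonempty_iff_ne_empty.mpr hUe
    have hUΩ : U ⊆ Ω := Finset.filter_subset _ _
    have husuppU : ∀ x, x ∉ U → u x = 0 := by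
      intro x hx
      by_cases hxΩ : x ∈ Ω
      · by_contra hne
        exact hx (Finset.mem_filter.mpr ⟨hxΩ, hne⟩)
      · exact husupp x hxΩ
    obtain ⟨x₀, hx₀U, hx₀min⟩ := Finset.exists_mem_eq_inf' hUne u
    set t := U.inf' hUne u with ht
    have htle : ∀ x ∈ U, t ≤ u x := fun x hx => Finset.inf'_le u hx
    have htpos : 0 < t := by
      rw [hx₀min]
      have h1 : u x₀ ≠ 0 := (Finset.mem_filter.mp hx₀U).2
      exact lt_of_le_of_ne (hu0 x₀) (Ne.symm h1)
    set u' := fun x => u x - t * eU U x with hu'def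
    have hu'U : ∀ x ∈ U, u' x = u x - t := fun x hx => by
      simp only [hu'def, eU_mem hx, mul_one]
    have hu'nU : ∀ x, x ∉ U → u' x = 0 := fun x hx => by
      simp only [hu'def, eU_notMem hx, mul_zero, husuppU x hx, sub_zero]
    have hu'0 : ∀ x, 0 ≤ u' x := by
      intro x
      by_cases hx : x ∈ U
      · rw [hu'U x hx]; linarith [htle x hx]
      · rw [hu'nU x hx]
    have hu'supp : ∀ x, x ∉ Ω → u' x = 0 := fun x hx => hu'nU x (fun h => hx (hUΩ h))
    have hcard' : (Ω.filter (fun x => u' x ≠ 0)).card ≤ n := by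
      have hsub : Ω.filter (fun x => u' x ≠ 0) ⊆ U.erase x₀ := by
        intro x hx
        obtain ⟨hxΩ, hxne⟩ := Finset.mem_filter.mp hx
        have hxU : x ∈ U := by
          by_contra hc
          exact hxne (hu'nU x hc)
        refine Finset.mem_erase.mpr ⟨?_, hxU⟩
        intro hxx0
        apply hxne
        rw [hxx0, hu'U x₀ hx₀U, ← hx₀min, sub_self]
      have h1 := Finset.card_le_card hsub
      have h2 := Finset.card_erase_of_mem hx₀U
      have h3 := Finset.card_pos.mpr ⟨x₀, hx₀U⟩
      omega
    have key : ∀ x y : V, |u y - u x| = t * |eU U y - eU U x| + |u' y - u' x| := by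
      intro x y
      by_cases hx : x ∈ U <;> by_cases hy : y ∈ U
      · have h1 : eU U y - eU U x = 0 := by rw [eU_mem hx, eU_mem hy]; ring
        have h2 : u' y - u' x = u y - u x := by rw [hu'U x hx, hu'U y hy]; ring
        rw [h1, h2, abs_zero, mul_zero, zero_add]
      · have hy0 : u y = 0 := husuppU y hy
        have h2 : u' y = 0 := hu'nU y hy
        have h1 : eU U y - eU U x = -1 := by rw [eU_mem hx, eU_notMem hy]; ring
        rw [hy0, h2, h1, hu'U x hx]
        have e1 : |(0:ℝ) - u x| = u x := by
          rw [zero_sub, abs_neg, abs_of_nonneg (hu0 x)]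
        have e2 : |(0:ℝ) - (u x - t)| = u x - t := by
          rw [zero_sub, abs_neg, abs_of_nonneg (by linarith [htle x hx])]
        rw [e1, e2, abs_neg, abs_one]
        ring
      · have hx0 : u x = 0 := husuppU x hx
        have h2 : u' x = 0 := hu'nU x hx
        have h1 : eU U y - eU U x = 1 := by rw [eU_mem hy, eU_notMem hx]; ring
        rw [hx0, h2, h1, hu'U y hy]
        have e1 : |u y - (0:ℝ)| = u y := by rw [sub_zero, abs_of_nonneg (hu0 y)]
        have e2 : |u y - t - (0:ℝ)| = u y - t := by
          rw [sub_zero, abs_of_nonneg (by linarith [htle y hy])]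
        rw [sub_zero, sub_zero, e1] at *
        rw [abs_of_nonneg (by linarith [htle y hy] : (0:ℝ) ≤ u y - t), abs_one]
        ring
      · have hx0 : u x = 0 := husuppU x hx
        have hy0 : u y = 0 := husuppU y hy
        rw [hx0, hy0, hu'nU x hx, hu'nU y hy, eU_notMem hx, eU_notMem hy]
        simp
    have heUsupp : ∀ x, x ∉ Ω → eU U x = 0 := fun x hx => eU_notMem (fun h => hx (hUΩ h))
    have hE : energy μ 1 u = t * energy μ 1 (eU U) + energy μ 1 u' := by
      rw [energy_one_eq_sum hG hΩT hnbr husupp,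
        energy_one_eq_sum hG hΩT hnbr heUsupp,
        energy_one_eq_sum hG hΩT hnbr hu'supp]
      have hsum : (∑ x ∈ T, ∑ y ∈ T, μ x y * |u y - u x|)
          = t * (∑ x ∈ T, ∑ y ∈ T, μ x y * |eU U y - eU U x|)
            + ∑ x ∈ T, ∑ y ∈ T, μ x y * |u' y - u' x| := by
        rw [Finset.mul_sum, ← Finset.sum_add_distrib]
        refine Finset.sum_congr rfl fun x _ => ?_
        rw [Finset.mul_sum, ← Finset.sum_add_distrib]
        refine Finset.sum_congr rfl fun y _ => ?_
        rw [key x y]; ring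
      rw [hsum]; ring
    have hP : pnormP ν Ω 1 u = t * (∑ x ∈ U, ν x) + pnormP ν Ω 1 u' := by
      rw [pnorm_one_eq, pnorm_one_eq, ← sum_eU (ν := ν) hUΩ,
        Finset.mul_sum, ← Finset.sum_add_distrib]
      refine Finset.sum_congr rfl fun x _ => ?_
      rw [abs_of_nonneg (hu0 x), abs_of_nonneg (hu'0 x)]
      simp only [hu'def]; ring
    have hvolpos : 0 < ∑ x ∈ U, ν x := Finset.sum_pos (fun x _ => hG.nuPos x) hUne
    have hchb : cheeger μ ν Ω * (∑ x ∈ U, ν x) ≤ bdryWt μ U := by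
      have hle : cheeger μ ν Ω ≤ bdryWt μ U / ∑ x ∈ U, ν x :=
        csInf_le ⟨0, cheeger_nonneg hG Ω⟩ ⟨U, hUΩ, hUne, rfl⟩
      calc cheeger μ ν Ω * (∑ x ∈ U, ν x)
          ≤ (bdryWt μ U / ∑ x ∈ U, ν x) * (∑ x ∈ U, ν x) :=
            mul_le_mul_of_nonneg_right hle hvolpos.le
        _ = bdryWt μ U := div_mul_cancel₀ _ hvolpos.ne'
    have ih' := ih u' hu'0 hu'supp hcard'
    rw [hE, hP, energy_indicator hG hΩT hnbr hUΩ]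
    calc cheeger μ ν Ω * (t * (∑ x ∈ U, ν x) + pnormP ν Ω 1 u')
        = t * (cheeger μ ν Ω * (∑ x ∈ U, ν x)) + cheeger μ ν Ω * pnormP ν Ω 1 u' := by ring
      _ ≤ t * bdryWt μ U + energy μ 1 u' :=
          add_le_add (mul_le_mul_of_nonneg_left hchb htpos.le) ih'

end Aux

end PGraph

namespace PGraph

/-- For a finite subset `Ω` of a weighted graph, the first eigenvalue of the
Dirichlet `1`-Laplacian (given by the Rayleigh quotient) equals the Dirichlet Cheeger
constant: `λ_{1,1}(Ω) = h_{μ,ν}(Ω)`. -/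
theorem lam1_one_eq_cheeger {V : Type*} {μ : V → V → ℝ} {ν : V → ℝ}
    (hG : IsWeightedGraph μ ν) (Ω : Finset V) :
    lam1 μ ν Ω 1 = cheeger μ ν Ω := by
  classical
  by_cases hΩ : Ω.Nonempty
  · set T : Finset V := Ω ∪ Ω.biUnion (fun x => (hG.locFin x).toFinset) with hT
    have hΩT : Ω ⊆ T := Finset.subset_union_left
    have hnbr : ∀ x ∈ Ω, Function.support (μ x) ⊆ (T : Set V) := by
      intro x hx y hy
      simp only [hT, Finset.coe_union, Set.mem_union, Finset.coe_biUnion, Finset.mem_coe,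
        Set.mem_iUnion]
      exact Or.inr ⟨x, hx, (hG.locFin x).mem_toFinset.mpr hy⟩
    have hCR : {t : ℝ | ∃ U : Finset V, U ⊆ Ω ∧ U.Nonempty ∧ t = bdryWt μ U / ∑ x ∈ U, ν x}
        ⊆ {t : ℝ | ∃ u : V → ℝ, (∀ x, x ∉ Ω → u x = 0) ∧ (∃ x ∈ Ω, u x ≠ 0) ∧
            t = energy μ 1 u / pnormP ν Ω 1 u} := by
      rintro s ⟨U, hUΩ, hUne, rfl⟩
      obtain ⟨x₀, hx₀⟩ := hUne
      refine ⟨eU U, fun x hx => eU_notMem (fun h => hx (hUΩ h)),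
        ⟨x₀, hUΩ hx₀, by rw [eU_mem hx₀]; exact one_ne_zero⟩, ?_⟩
      rw [energy_indicator hG hΩT hnbr hUΩ, pnorm_indicator hUΩ]
    have hlow : ∀ s ∈ {t : ℝ | ∃ u : V → ℝ, (∀ x, x ∉ Ω → u x = 0) ∧ (∃ x ∈ Ω, u x ≠ 0) ∧
        t = energy μ 1 u / pnormP ν Ω 1 u}, cheeger μ ν Ω ≤ s := by
      rintro s ⟨u, husupp, ⟨x₀, hx₀Ω, hux₀⟩, rfl⟩
      set w : V → ℝ := fun x => |u x| with hw
      have hw0 : ∀ x, 0 ≤ w x := fun x => abs_nonneg _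
      have hwsupp : ∀ x, x ∉ Ω → w x = 0 := fun x hx => by
        simp only [hw, husupp x hx, abs_zero]
      have hwP : pnormP ν Ω 1 w = pnormP ν Ω 1 u := by
        rw [pnorm_one_eq, pnorm_one_eq]
        exact Finset.sum_congr rfl fun x _ => by simp only [hw, abs_abs]
      have hwE : energy μ 1 w ≤ energy μ 1 u := by
        rw [energy_one_eq_sum hG hΩT hnbr hwsupp, energy_one_eq_sum hG hΩT hnbr husupp]
        have hs : (∑ x ∈ T, ∑ y ∈ T, μ x y * |w y - w x|)
            ≤ ∑ x ∈ T, ∑ y ∈ T, μ x y * |u y - u x| :=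
          Finset.sum_le_sum fun x _ => Finset.sum_le_sum fun y _ =>
            mul_le_mul_of_nonneg_left (abs_abs_sub_abs_le_abs_sub _ _) (hG.nonneg x y)
        linarith
      have hPpos : 0 < pnormP ν Ω 1 u := by
        rw [pnorm_one_eq]
        exact Finset.sum_pos' (fun x _ => mul_nonneg (abs_nonneg _) (hG.nuPos x).le)
          ⟨x₀, hx₀Ω, mul_pos (abs_pos.mpr hux₀) (hG.nuPos x₀)⟩
      have hmain := energy_ge_cheeger_mul hG hΩT hnbr
        (Ω.filter (fun x => w x ≠ 0)).card w hw0 hwsupp (le_refl _)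
      rw [hwP] at hmain
      rw [le_div_iff₀ hPpos]
      linarith
    apply le_antisymm
    · exact csInf_le_csInf ⟨cheeger μ ν Ω, hlow⟩
        ⟨_, Ω, Finset.Subset.refl Ω, hΩ, rfl⟩ hCR
    · exact le_csInf ⟨_, hCR ⟨Ω, Finset.Subset.refl Ω, hΩ, rfl⟩⟩ hlow
  · have hE : Ω = ∅ := Finset.not_nonempty_iff_eq_empty.mp hΩ
    subst hE
    have h1 : {t : ℝ | ∃ u : V → ℝ, (∀ x, x ∉ (∅ : Finset V) → u x = 0) ∧
        (∃ x ∈ (∅ : Finset V), u x ≠ 0) ∧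
        t = energy μ 1 u / pnormP ν (∅ : Finset V) 1 u} = ∅ := by
      apply Set.eq_empty_iff_forall_notMem.mpr
      rintro t ⟨u, _, ⟨x, hx, _⟩, _⟩
      exact absurd hx (Finset.notMem_empty x)
    have h2 : {t : ℝ | ∃ U : Finset V, U ⊆ (∅ : Finset V) ∧ U.Nonempty ∧
        t = bdryWt μ U / ∑ x ∈ U, ν x} = ∅ := by
      apply Set.eq_empty_iff_forall_notMem.mpr
      rintro t ⟨U, hU, ⟨x, hx⟩, _⟩
      exact absurd (hU hx) (Finset.notMem_empty x)
    unfold lam1 cheeger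
    rw [h1, h2]

end PGraph
end

section
/- (Co-area formula on graphs) For a finite subset Ω of a weighted graph and a nonnegative function u on Ω extended by zero, with superlevel sets Ω_t(u) = {x ∈ Ω : u(x) > t}, one has (1/2) Σ_{x,y} |ū(x) - ū(y)| μ_{xy} = ∫₀^∞ |∂Ω_t(u)|_μ dt, and ∫₀^∞ |Ω_t(u)|_ν dt = Σ_{x∈Ω} u(x) ν_x. -/
open scoped BigOperators

/-!
Both sides are linear in the edge (resp. vertex) contributions, so the formula reduces to the
one-dimensional layer-cake identity `∫₀^∞ 1[a ≤ t < b] dt = (b - a)⁺` for `0 ≤ a`.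
At level `t > 0`, the edge `{x, y}` with `u y ≤ u x` is cut by the superlevel set exactly when
`t ∈ [u y, u x)`, and the vertex `x` lies in it exactly when `t ∈ [0, u x)`. All sums are
finite because `u` vanishes off the finite set `Ω` and the graph is locally finite; symmetry of
`μ` turns `|u x - u y|` into twice the positive part `(u x - u y)⁺`.
-/

namespace PGraph

open MeasureTheory Classical

section LayerCake

theorem integrable_indicator_Ico_const (a b c : ℝ) :
    Integrable ((Set.Ico a b).indicator fun _ => c) :=
  (integrable_indicator_iff measurableSet_Ico).2 (integrableOn_const (by simp))

theorem integral_Ioi_zero_indicator_Ico {a : ℝ} (b c : ℝ) (ha : 0 ≤ a) :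
    ∫ t in Set.Ioi (0 : ℝ), (Set.Ico a b).indicator (fun _ => c) t = max (b - a) 0 * c := by
  have hsub : Set.Ico a b ⊆ Set.Ici 0 := fun t ht => ha.trans ht.1
  rw [Measure.restrict_congr_set Ioi_ae_eq_Ici, setIntegral_indicator measurableSet_Ico,
    Set.inter_eq_right.2 hsub, setIntegral_const, Real.volume_real_Ico, smul_eq_mul]

theorem integral_Ioi_zero_sum_indicator_Ico {ι : Type*} (s : Finset ι) (a b c : ι → ℝ)
    (ha : ∀ i ∈ s, 0 ≤ a i) :
    ∫ t in Set.Ioi (0 : ℝ), ∑ i ∈ s, (Set.Ico (a i) (b i)).indicator (fun _ => c i) t =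
      ∑ i ∈ s, max (b i - a i) 0 * c i := by
  rw [integral_finsetSum s fun i _ => (integrable_indicator_Ico_const _ _ _).integrableOn]
  exact Finset.sum_congr rfl fun i hi => integral_Ioi_zero_indicator_Ico _ _ (ha i hi)

end LayerCake

theorem finsum_finsum_eq_sum_sum {α β M : Type*} [AddCommMonoid M] (F : α → β → M)
    (S : Finset α) (T : Finset β) (hF : ∀ x y, F x y ≠ 0 → x ∈ S ∧ y ∈ T) :
    ∑ᶠ x, ∑ᶠ y, F x y = ∑ x ∈ S, ∑ y ∈ T, F x y := by
  have hrow : ∀ x, ∑ᶠ y, F x y = ∑ y ∈ T, F x y := fun x =>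
    finsum_eq_sum_of_support_subset _ fun y hy => (hF x y hy).2
  rw [finsum_eq_sum_of_support_subset _ (s := S)]
  · exact Finset.sum_congr rfl fun x _ => hrow x
  · intro x hx
    by_contra hxS
    exact hx (finsum_eq_zero_of_forall_eq_zero fun y => not_not.1 fun h => hxS (hF x y h).1)

section WeightedGraph

variable {V : Type*} {μ : V → V → ℝ}

theorem exists_finset_superset_forall_ne_zero_mem (hμ : ∀ x, (Function.support (μ x)).Finite)
    (Ω : Finset V) : ∃ S : Finset V, Ω ⊆ S ∧ ∀ x ∈ Ω, ∀ y, μ x y ≠ 0 → y ∈ S :=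
  ⟨Ω ∪ Ω.biUnion fun x => (hμ x).toFinset, Finset.subset_union_left, fun x hx _ hy =>
    Finset.mem_union_right _ (Finset.mem_biUnion.2 ⟨x, hx, (hμ x).mem_toFinset.2 hy⟩)⟩

section ZeroExtension

variable {Ω S : Finset V} {u : V → ℝ}

theorem mem_of_mul_abs_sub_ne_zero (hμ : ∀ x y, μ x y = μ y x)
    (hzero : ∀ x, x ∉ Ω → u x = 0) (hΩS : Ω ⊆ S) (hS : ∀ x ∈ Ω, ∀ y, μ x y ≠ 0 → y ∈ S)
    {x y : V} (hxy : μ x y * |u x - u y| ≠ 0) : x ∈ S ∧ y ∈ S := by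
  have hμxy : μ x y ≠ 0 := left_ne_zero_of_mul hxy
  have hu : u x ≠ u y := fun h => right_ne_zero_of_mul hxy (by rw [h, sub_self, abs_zero])
  by_cases hx : x ∈ Ω
  · exact ⟨hΩS hx, hS x hx y hμxy⟩
  · have hy : y ∈ Ω := by
      by_contra hy
      exact hu (by rw [hzero x hx, hzero y hy])
    exact ⟨hS y hy x (hμ y x ▸ hμxy), hΩS hy⟩

theorem mem_filter_lt_iff (hzero : ∀ x, x ∉ Ω → u x = 0) {t : ℝ} (ht : 0 ≤ t) (x : V) :
    x ∈ Ω.filter (fun x => t < u x) ↔ t < u x := by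
  refine ⟨fun h => (Finset.mem_filter.1 h).2, fun h => Finset.mem_filter.2 ⟨?_, h⟩⟩
  by_contra hx
  rw [hzero x hx] at h
  exact ht.not_gt h

end ZeroExtension

theorem sum_sum_mul_abs_sub_eq_two_mul (hμ : ∀ x y, μ x y = μ y x) (S : Finset V)
    (u : V → ℝ) :
    ∑ x ∈ S, ∑ y ∈ S, μ x y * |u x - u y| =
      2 * ∑ x ∈ S, ∑ y ∈ S, max (u x - u y) 0 * μ x y := by
  have hswap : ∑ x ∈ S, ∑ y ∈ S, max (u y - u x) 0 * μ x y =
      ∑ x ∈ S, ∑ y ∈ S, max (u x - u y) 0 * μ x y := by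
    rw [Finset.sum_comm]
    exact Finset.sum_congr rfl fun x _ => Finset.sum_congr rfl fun y _ => by rw [hμ]
  calc ∑ x ∈ S, ∑ y ∈ S, μ x y * |u x - u y|
      = ∑ x ∈ S, ∑ y ∈ S, (max (u x - u y) 0 * μ x y + max (u y - u x) 0 * μ x y) :=
        Finset.sum_congr rfl fun x _ => Finset.sum_congr rfl fun y _ => by
          rw [← max_zero_add_max_neg_zero_eq_abs_self, neg_sub]
          ring
    _ = 2 * ∑ x ∈ S, ∑ y ∈ S, max (u x - u y) 0 * μ x y := by
        simp only [Finset.sum_add_distrib, hswap]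
        ring

theorem bdryWt_eq_sum_sum_ite {U S : Finset V} (hUS : U ⊆ S)
    (hS : ∀ x ∈ U, ∀ y, μ x y ≠ 0 → y ∈ S) :
    bdryWt μ U = ∑ x ∈ S, ∑ y ∈ S, if x ∈ U ∧ y ∉ U then μ x y else 0 := by
  have hrow : ∀ x ∈ U, ∑ᶠ y ∈ {z : V | z ∉ U}, μ x y = ∑ y ∈ S, if y ∉ U then μ x y else 0 := by
    intro x hx
    rw [← Finset.sum_filter]
    refine finsum_mem_eq_sum_of_inter_support_eq _ (Set.ext fun y => ?_)
    simp only [Set.mem_inter_iff, Set.mem_ofPred_eq, Function.mem_support, Finset.coe_filter]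
    exact ⟨fun h => ⟨⟨hS x hx y h.2, h.1⟩, h.2⟩, fun h => ⟨h.1.2, h.2⟩⟩
  calc bdryWt μ U = ∑ x ∈ U, ∑ y ∈ S, if y ∉ U then μ x y else 0 := Finset.sum_congr rfl hrow
    _ = ∑ x ∈ U, ∑ y ∈ S, if x ∈ U ∧ y ∉ U then μ x y else 0 :=
      Finset.sum_congr rfl fun x hx => by simp only [hx, true_and]
    _ = ∑ x ∈ S, ∑ y ∈ S, if x ∈ U ∧ y ∉ U then μ x y else 0 :=
      Finset.sum_subset hUS fun x _ hx => Finset.sum_eq_zero fun y _ => by simp [hx]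

theorem bdryWt_superlevel_eq_sum_indicator {Ω S : Finset V} {u : V → ℝ}
    (hzero : ∀ x, x ∉ Ω → u x = 0) (hΩS : Ω ⊆ S) (hS : ∀ x ∈ Ω, ∀ y, μ x y ≠ 0 → y ∈ S)
    {t : ℝ} (ht : 0 ≤ t) :
    bdryWt μ (Ω.filter fun x => t < u x) =
      ∑ p ∈ S ×ˢ S, (Set.Ico (u p.2) (u p.1)).indicator (fun _ => μ p.1 p.2) t := by
  have hsub : Ω.filter (fun x => t < u x) ⊆ Ω := Finset.filter_subset _ _
  rw [bdryWt_eq_sum_sum_ite (hsub.trans hΩS) fun x hx => hS x (hsub hx), Finset.sum_product]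
  simp only [mem_filter_lt_iff hzero ht, Set.indicator_apply, Set.mem_Ico, not_lt, and_comm]

theorem sum_superlevel_eq_sum_indicator (Ω : Finset V) (u ν : V → ℝ) {t : ℝ} (ht : 0 ≤ t) :
    ∑ x ∈ Ω.filter (fun x => t < u x), ν x =
      ∑ x ∈ Ω, (Set.Ico 0 (u x)).indicator (fun _ => ν x) t := by
  simp only [Finset.sum_filter, Set.indicator_apply, Set.mem_Ico, ht, true_and]

end WeightedGraph

/-- the co-area formula on graphs. For a nonnegative function `u` on a finite
subset `Ω` (extended by zero), with superlevel sets `Ω_t(u) = {x ∈ Ω : u x > t}`: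
`(1/2) ∑_{x,y} |u(x) - u(y)| μ_{xy} = ∫₀^∞ |∂Ω_t(u)|_μ dt` and
`∫₀^∞ |Ω_t(u)|_ν dt = ∑_{x∈Ω} u(x) ν_x`. -/
theorem coarea_formula {V : Type*} {μ : V → V → ℝ} {ν : V → ℝ}
    (hG : IsWeightedGraph μ ν) (Ω : Finset V) (u : V → ℝ)
    (hzero : ∀ x, x ∉ Ω → u x = 0) (hnonneg : ∀ x, 0 ≤ u x) :
    ((1 / 2) * ∑ᶠ x : V, ∑ᶠ y : V, μ x y * |u x - u y| =
        ∫ t in Set.Ioi (0 : ℝ), bdryWt μ (Ω.filter fun x => t < u x)) ∧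
      (∫ t in Set.Ioi (0 : ℝ), (∑ x ∈ Ω.filter (fun x => t < u x), ν x)) =
        ∑ x ∈ Ω, u x * ν x := by
  obtain ⟨S, hΩS, hS⟩ := exists_finset_superset_forall_ne_zero_mem hG.locFin Ω
  constructor
  · rw [finsum_finsum_eq_sum_sum _ S S fun x y =>
        mem_of_mul_abs_sub_ne_zero hG.symm hzero hΩS hS,
      sum_sum_mul_abs_sub_eq_two_mul hG.symm,
      setIntegral_congr_fun measurableSet_Ioi fun t ht =>
        bdryWt_superlevel_eq_sum_indicator hzero hΩS hS (le_of_lt ht),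
      integral_Ioi_zero_sum_indicator_Ico _ _ _ _ fun p _ => hnonneg p.2, Finset.sum_product]
    ring
  · rw [setIntegral_congr_fun measurableSet_Ioi fun t ht =>
        sum_superlevel_eq_sum_indicator Ω u ν (le_of_lt ht),
      integral_Ioi_zero_sum_indicator_Ico _ _ _ _ fun _ _ => le_rfl]
    simp only [sub_zero, max_eq_left (hnonneg _)]

end PGraph
end
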